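/- arXiv:math/0511011 — 9 statements merged into one kernel-verified Lean document; each statement's English description precedes it below -/
import Mathlib

section
/- Let W_n be an increasing sequence of Borel subsets of (0,1)×(0,1) with union W, and let M be the set of positive Borel measures m on (0,1)×(0,1) both of whose marginals are bounded by Lebesgue measure. Define α(W) = sup{m(W) : m ∈ M}. Then α(W_n) increases to α(W). -/
open MeasureTheory Set
open scoped ENNReal

noncomputable section

/-- The set of positive Borel measures on the plane, supported in the unit
square (in the sense that both marginals are bounded by Lebesgue measure
restricted to `(0,1)`). -/
def Mset : Set (Measure (ℝ × ℝ)) :=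
  {m | m.map Prod.fst ≤ volume.restrict (Ioo (0:ℝ) 1) ∧
       m.map Prod.snd ≤ volume.restrict (Ioo (0:ℝ) 1)}

/-- `α(W) = sup { m(W) : m ∈ M }`. -/
def alpha (W : Set (ℝ × ℝ)) : ℝ≥0∞ := ⨆ m ∈ Mset, m W

theorem Directed.iSup_measure_iUnion {α ι : Type*} [MeasurableSpace α] [Countable ι]
    (S : Set (Measure α)) {s : ι → Set α} (hd : Directed (· ⊆ ·) s) :
    ⨆ μ ∈ S, μ (⋃ i, s i) = ⨆ i, ⨆ μ ∈ S, μ (s i) := by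
  simp only [hd.measure_iUnion]
  rw [iSup_comm]
  exact iSup_congr fun μ => iSup_comm

theorem alpha_mono : Monotone alpha :=
  fun _ _ hUV => iSup₂_mono fun _ _ => measure_mono hUV

theorem alpha_iUnion_of_monotone {W : ℕ → Set (ℝ × ℝ)} (hW : Monotone W) :
    alpha (⋃ n, W n) = ⨆ n, alpha (W n) :=
  hW.directed_le.iSup_measure_iUnion Mset

theorem stmt0_general (W : ℕ → Set (ℝ × ℝ)) (hmono : Monotone W) :
    Monotone (fun n => alpha (W n)) ∧
    Filter.Tendsto (fun n => alpha (W n)) Filter.atTop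
      (nhds (alpha (⋃ n, W n))) := by
  refine ⟨alpha_mono.comp hmono, ?_⟩
  rw [alpha_iUnion_of_monotone hmono]
  exact tendsto_atTop_iSup (alpha_mono.comp hmono)

theorem stmt0 (W : ℕ → Set (ℝ × ℝ)) (hmono : Monotone W)
    (hmeas : ∀ n, MeasurableSet (W n))
    (hsub : ∀ n, W n ⊆ Ioo (0:ℝ) 1 ×ˢ Ioo (0:ℝ) 1) :
    Monotone (fun n => alpha (W n)) ∧
    Filter.Tendsto (fun n => alpha (W n)) Filter.atTop
      (nhds (alpha (⋃ n, W n))) :=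
  stmt0_general W hmono
end
end

section
/- Let W_n be an increasing sequence of Borel subsets of (0,1)×(0,1) with union W. Define β(W) = inf{Leb(U)+Leb(V) : U,V Borel subsets of (0,1) with W ⊆ (U×(0,1)) ∪ ((0,1)×V)}. Then β(W_n) increases to β(W). -/
open MeasureTheory Set
open scoped ENNReal

noncomputable section

/-- `β(W)`: the infimum of `Leb(U)+Leb(V)` over Borel sets `U, V ⊆ (0,1)`
whose "cross" `(U×(0,1)) ∪ ((0,1)×V)` covers `W`. -/
def beta (W : Set (ℝ × ℝ)) : ℝ≥0∞ :=
  ⨅ (U : Set ℝ) (V : Set ℝ) (_ : MeasurableSet U) (_ : MeasurableSet V)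
    (_ : U ⊆ Ioo (0:ℝ) 1) (_ : V ⊆ Ioo (0:ℝ) 1)
    (_ : W ⊆ U ×ˢ Ioo (0:ℝ) 1 ∪ Ioo (0:ℝ) 1 ×ˢ V),
    volume U + volume V

/-!
Covers form a lattice under `(U, V) ⊔ (U', V') = (U ∪ U', V ∩ V')` and
`(U, V) ⊓ (U', V') = (U ∩ U', V ∪ V')`, both of which still cover `W` when the two factors do,
and the cost `Leb U + Leb V` is modular on it. Hence joining a near-optimal cover of `W k` with
a cover of `W k` costs at most the cost of the other cover plus the excess of the near-optimal
one. Choosing covers `(U k, V k)` of `W k` with excesses `δ k` summing to less than `ε`, every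
tail join `(⋃_{i ≥ n} U i, ⋂_{i ≥ n} V i)` covers `W n` at cost at most `sup_k β(W k) + ε`,
and `(limsup U, liminf V)` covers `⋃ W` at no greater cost.
-/

structure IsCrossCover (W : Set (ℝ × ℝ)) (U V : Set ℝ) : Prop where
  measurableSet_left : MeasurableSet U
  measurableSet_right : MeasurableSet V
  left_subset : U ⊆ Ioo 0 1
  right_subset : V ⊆ Ioo 0 1
  subset_square : W ⊆ Ioo 0 1 ×ˢ Ioo 0 1
  mem_left : ∀ p ∈ W, p.2 ∉ V → p.1 ∈ U

theorem isCrossCover_iff {W : Set (ℝ × ℝ)} {U V : Set ℝ} :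
    IsCrossCover W U V ↔ MeasurableSet U ∧ MeasurableSet V ∧ U ⊆ Ioo 0 1 ∧ V ⊆ Ioo 0 1 ∧
      W ⊆ U ×ˢ Ioo 0 1 ∪ Ioo 0 1 ×ˢ V := by
  constructor
  · rintro ⟨hU, hV, hUI, hVI, hW, hmem⟩
    refine ⟨hU, hV, hUI, hVI, fun p hp => ?_⟩
    by_cases h : p.2 ∈ V
    · exact Or.inr ⟨(hW hp).1, h⟩
    · exact Or.inl ⟨hmem p hp h, (hW hp).2⟩
  · rintro ⟨hU, hV, hUI, hVI, hW⟩
    refine ⟨hU, hV, hUI, hVI, fun p hp => ?_, fun p hp h => ?_⟩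
    · rcases hW hp with ⟨h1, h2⟩ | ⟨h1, h2⟩
      exacts [⟨hUI h1, h2⟩, ⟨h1, hVI h2⟩]
    · rcases hW hp with ⟨h1, -⟩ | ⟨-, h2⟩
      exacts [h1, absurd h2 h]

theorem beta_eq_iInf (W : Set (ℝ × ℝ)) :
    beta W = ⨅ (U : Set ℝ) (V : Set ℝ) (_ : IsCrossCover W U V), volume U + volume V := by
  simp only [isCrossCover_iff, iInf_and]
  rfl

namespace IsCrossCover

variable {W W' : Set (ℝ × ℝ)} {U V U' V' : Set ℝ}

theorem beta_le (h : IsCrossCover W U V) : beta W ≤ volume U + volume V := by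
  rw [beta_eq_iInf]
  exact iInf₂_le_of_le U V (iInf_le _ h)

theorem beta_ne_top (h : IsCrossCover W U V) : beta W ≠ ∞ := by
  refine ne_top_of_le_ne_top (ENNReal.add_ne_top.2 ⟨?_, ?_⟩) h.beta_le
  exacts [measure_ne_top_of_subset h.left_subset (by simp),
    measure_ne_top_of_subset h.right_subset (by simp)]

theorem mono (h : IsCrossCover W' U V) (hW : W ⊆ W') : IsCrossCover W U V :=
  ⟨h.1, h.2, h.3, h.4, hW.trans h.5, fun p hp => h.6 p (hW hp)⟩

theorem inter_union (h : IsCrossCover W U V) (h' : IsCrossCover W U' V') :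
    IsCrossCover W (U ∩ U') (V ∪ V') :=
  ⟨h.1.inter h'.1, h.2.union h'.2, inter_subset_left.trans h.3, union_subset h.4 h'.4, h.5,
    fun p hp hp2 => ⟨h.6 p hp fun hv => hp2 (.inl hv), h'.6 p hp fun hv => hp2 (.inr hv)⟩⟩

theorem biUnion_biInter {ι : Type*} {s : Set ι} {U V : ι → Set ℝ} (hs : s.Countable)
    (hne : s.Nonempty) (h : ∀ i ∈ s, IsCrossCover W (U i) (V i)) :
    IsCrossCover W (⋃ i ∈ s, U i) (⋂ i ∈ s, V i) := by
  obtain ⟨j, hj⟩ := hne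
  refine ⟨.biUnion hs fun i hi => (h i hi).1, .biInter hs fun i hi => (h i hi).2,
    iUnion₂_subset fun i hi => (h i hi).3, (biInter_subset_of_mem hj).trans (h j hj).4,
    (h j hj).5, fun p hp hp2 => ?_⟩
  simp only [mem_iInter, not_forall] at hp2
  obtain ⟨i, hi, hv⟩ := hp2
  exact mem_biUnion hi ((h i hi).6 p hp hv)

theorem iUnion_of_antitone {W : ℕ → Set (ℝ × ℝ)} {A B : ℕ → Set ℝ} (hW : Monotone W)
    (hA : Antitone A) (h : ∀ n, IsCrossCover (W n) (A n) (B n)) :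
    IsCrossCover (⋃ n, W n) (⋂ n, A n) (⋃ n, B n) := by
  refine ⟨.iInter fun n => (h n).1, .iUnion fun n => (h n).2, (iInter_subset A 0).trans (h 0).3,
    iUnion_subset fun n => (h n).4, iUnion_subset fun n => (h n).5, fun p hp hp2 => ?_⟩
  obtain ⟨m, hm⟩ := mem_iUnion.1 hp
  simp only [mem_iUnion, not_exists] at hp2
  exact mem_iInter.2 fun n => hA (le_max_left n m)
    ((h (max n m)).6 p (hW (le_max_right n m) hm) (hp2 _))

/-- The meet `(U ∩ U', V ∪ V')` also covers `W`, and the cost is modular. -/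
theorem volume_union_add_volume_inter_add_beta_le (h : IsCrossCover W U V)
    (h' : IsCrossCover W U' V') :
    volume (U ∪ U') + volume (V ∩ V') + beta W ≤ volume U + volume V + (volume U' + volume V') :=
  calc volume (U ∪ U') + volume (V ∩ V') + beta W
      ≤ volume (U ∪ U') + volume (V ∩ V') + (volume (U ∩ U') + volume (V ∪ V')) := by
        gcongr
        exact (h.inter_union h').beta_le
    _ = (volume (U ∪ U') + volume (U ∩ U')) + (volume (V ∪ V') + volume (V ∩ V')) := by ring
    _ = volume U + volume V + (volume U' + volume V') := by
        rw [measure_union_add_inter U h'.1, measure_union_add_inter V h'.2]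
        ring

end IsCrossCover

theorem exists_isCrossCover_lt {W : Set (ℝ × ℝ)} {c : ℝ≥0∞} (h : beta W < c) :
    ∃ U V, IsCrossCover W U V ∧ volume U + volume V < c := by
  rw [beta_eq_iInf] at h
  simpa only [iInf_lt_iff, exists_prop] using h

theorem beta_mono : Monotone beta := fun _ W' hW => by
  rw [beta_eq_iInf W']
  exact le_iInf₂ fun U V => le_iInf fun h => (h.mono hW).beta_le

theorem volume_biUnion_add_volume_biInter_le {ι : Type*} [LinearOrder ι] {W : ι → Set (ℝ × ℝ)}
    {U V : ι → Set ℝ} {L : ℝ≥0∞} {δ : ι → ℝ≥0∞} (hW : Monotone W)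
    (hcov : ∀ i, IsCrossCover (W i) (U i) (V i))
    (hcost : ∀ i, volume (U i) + volume (V i) ≤ beta (W i) + δ i) (hL : ∀ i, beta (W i) ≤ L)
    {s : Finset ι} (hs : s.Nonempty) :
    volume (⋃ i ∈ s, U i) + volume (⋂ i ∈ s, V i) ≤ L + ∑ i ∈ s, δ i := by
  classical
  induction s using Finset.induction_on_min with
  | empty => exact absurd hs Finset.not_nonempty_empty
  | insert a s has ih =>
    rcases s.eq_empty_or_nonempty with rfl | hs'
    · simpa using (hcost a).trans (add_le_add_left (hL a) _)
    have hjoin : IsCrossCover (W a) (⋃ i ∈ s, U i) (⋂ i ∈ s, V i) :=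
      .biUnion_biInter s.countable_toSet hs' fun i hi => (hcov i).mono (hW (has i hi).le)
    rw [Finset.set_biUnion_insert, Finset.set_biInter_insert,
      Finset.sum_insert fun ha => lt_irrefl a (has a ha)]
    refine (ENNReal.add_le_add_iff_right (hcov a).beta_ne_top).1 ?_
    calc volume (U a ∪ ⋃ i ∈ s, U i) + volume (V a ∩ ⋂ i ∈ s, V i) + beta (W a)
        ≤ volume (U a) + volume (V a) + (volume (⋃ i ∈ s, U i) + volume (⋂ i ∈ s, V i)) :=
          (hcov a).volume_union_add_volume_inter_add_beta_le hjoin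
      _ ≤ beta (W a) + δ a + (L + ∑ i ∈ s, δ i) := add_le_add (hcost a) (ih hs')
      _ = L + (δ a + ∑ i ∈ s, δ i) + beta (W a) := by ring

theorem volume_biUnion_Ici_add_volume_biInter_Ici_le {W : ℕ → Set (ℝ × ℝ)} {U V : ℕ → Set ℝ}
    {L : ℝ≥0∞} {δ : ℕ → ℝ≥0∞} (hW : Monotone W) (hcov : ∀ i, IsCrossCover (W i) (U i) (V i))
    (hcost : ∀ i, volume (U i) + volume (V i) ≤ beta (W i) + δ i) (hL : ∀ i, beta (W i) ≤ L)
    (n : ℕ) :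
    volume (⋃ i ∈ Ici n, U i) + volume (⋂ i ∈ Ici n, V i) ≤ L + ∑' i, δ i := by
  have hU : ⋃ i ∈ Ici n, U i = ⋃ m, ⋃ i ∈ Finset.Icc n (n + m), U i := by
    ext x
    simp only [mem_iUnion, mem_Ici, Finset.mem_Icc, exists_prop]
    constructor
    · rintro ⟨i, hi, hx⟩
      exact ⟨i - n, i, ⟨hi, by omega⟩, hx⟩
    · rintro ⟨-, i, ⟨hi, -⟩, hx⟩
      exact ⟨i, hi, hx⟩
  have hmono : Monotone fun m => ⋃ i ∈ Finset.Icc n (n + m), U i := fun m m' hm =>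
    biUnion_subset_biUnion_left fun i hi => by
      simp only [Finset.coe_Icc, mem_Icc] at hi ⊢
      omega
  rw [hU, hmono.measure_iUnion, ENNReal.iSup_add]
  refine iSup_le fun m => ?_
  calc volume (⋃ i ∈ Finset.Icc n (n + m), U i) + volume (⋂ i ∈ Ici n, V i)
      ≤ volume (⋃ i ∈ Finset.Icc n (n + m), U i) + volume (⋂ i ∈ Finset.Icc n (n + m), V i) := by
        gcongr
        exact iInter_mono' fun hi => ⟨mem_Ici.2 (Finset.mem_Icc.1 hi).1, subset_rfl⟩
    _ ≤ L + ∑ i ∈ Finset.Icc n (n + m), δ i :=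
        volume_biUnion_add_volume_biInter_le hW hcov hcost hL ⟨n, by simp⟩
    _ ≤ L + ∑' i, δ i := by
        gcongr
        exact ENNReal.sum_le_tsum _

theorem beta_iUnion_le_iSup {W : ℕ → Set (ℝ × ℝ)} (hW : Monotone W) :
    beta (⋃ n, W n) ≤ ⨆ n, beta (W n) := by
  refine ENNReal.le_of_forall_pos_le_add fun ε hε hL => ?_
  obtain ⟨δ, hδ, hδε⟩ := ENNReal.exists_pos_sum_of_countable (ENNReal.coe_pos.2 hε).ne' ℕ
  have hβ : ∀ n, beta (W n) ≤ ⨆ n, beta (W n) := le_iSup (fun n => beta (W n))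
  have hcover : ∀ n, ∃ U V, IsCrossCover (W n) U V ∧ volume U + volume V < beta (W n) + δ n :=
    fun n => exists_isCrossCover_lt <| ENNReal.lt_add_right ((hβ n).trans_lt hL).ne
      (ENNReal.coe_ne_zero.2 (hδ n).ne')
  choose U V hcov hcost using hcover
  have htail : ∀ n, IsCrossCover (W n) (⋃ i ∈ Ici n, U i) (⋂ i ∈ Ici n, V i) := fun n =>
    .biUnion_biInter (to_countable _) nonempty_Ici fun i hi => (hcov i).mono (hW hi)
  have hV : Monotone fun n => ⋂ i ∈ Ici n, V i := fun m n hmn =>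
    biInter_subset_biInter_left (Ici_subset_Ici.2 hmn)
  calc beta (⋃ n, W n)
      ≤ volume (⋂ n, ⋃ i ∈ Ici n, U i) + volume (⋃ n, ⋂ i ∈ Ici n, V i) :=
        (IsCrossCover.iUnion_of_antitone hW
          (fun m n hmn => biUnion_subset_biUnion_left (Ici_subset_Ici.2 hmn)) htail).beta_le
    _ ≤ ⨆ n, (volume (⋃ i ∈ Ici n, U i) + volume (⋂ i ∈ Ici n, V i)) := by
        rw [hV.measure_iUnion, ENNReal.add_iSup]
        refine iSup_mono fun n => ?_
        gcongr
        exact iInter_subset _ n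
    _ ≤ (⨆ n, beta (W n)) + ε := iSup_le fun n =>
        (volume_biUnion_Ici_add_volume_biInter_Ici_le hW hcov (fun i => (hcost i).le) hβ n).trans
          (by gcongr)

theorem stmt1_general (W : ℕ → Set (ℝ × ℝ)) (hmono : Monotone W) :
    Monotone (fun n => beta (W n)) ∧
    Filter.Tendsto (fun n => beta (W n)) Filter.atTop
      (nhds (beta (⋃ n, W n))) := by
  have hβ : Monotone (fun n => beta (W n)) := beta_mono.comp hmono
  refine ⟨hβ, ?_⟩
  have hsup : (⨆ n, beta (W n)) = beta (⋃ n, W n) :=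
    le_antisymm (iSup_le fun n => beta_mono (subset_iUnion W n)) (beta_iUnion_le_iSup hmono)
  exact hsup ▸ tendsto_atTop_iSup hβ

theorem stmt1 (W : ℕ → Set (ℝ × ℝ)) (hmono : Monotone W)
    (hmeas : ∀ n, MeasurableSet (W n))
    (hsub : ∀ n, W n ⊆ Ioo (0:ℝ) 1 ×ˢ Ioo (0:ℝ) 1) :
    Monotone (fun n => beta (W n)) ∧
    Filter.Tendsto (fun n => beta (W n)) Filter.atTop
      (nhds (beta (⋃ n, W n))) :=
  stmt1_general W hmono
end
end

section
/- For every sequence of pairs of Lebesgue-measurable subsets (A_n, B_n) of (0,1), there exists a subsequence (again denoted (A_n,B_n)) such that the limits f(x) = lim_n (1/n)·#{k ≤ n : x ∈ A_k}, g(y) = lim_n (1/n)·#{k ≤ n : y ∈ B_k}, and h(x,y) = lim_n (1/n)·#{k ≤ n : x ∈ A_k and y ∈ B_k} exist for almost all x, y ∈ (0,1), and h(x,y) = f(x)·g(y) for almost all (x,y). -/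
/-!
Indicator functions are bounded in `L²(0,1)`, so along a subsequence `1_{A n} ⇀ f` and
`1_{B n} ⇀ g` weakly, with `0 ≤ f, g ≤ 1`. The residues `r n = 1_{A n} - f` and
`s n = 1_{B n} - g` are weakly null, so a further subsequence is almost orthogonal:
`∑_{j<k} |⟪r k, r j⟫|` and `∑_{j<k} |⟪s k, s j⟫|` stay bounded. By Fubini
`⟪r k ⊗ s k, r j ⊗ s j⟫ = ⟪r k, r j⟫ ⟪s k, s j⟫`, so the products `r k (x) s k (y)` are almost
orthogonal too. For a bounded almost orthogonal sequence `∫ (∑_{k<N} r k)² = O(N)`; summing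
these second moments along `N = m²` and using boundedness between consecutive squares gives
almost everywhere Cesàro convergence to `0`. Expanding
`1_{A k × B k}(x, y) = (f x + r k x) (g y + s k y)` then yields the limits `f`, `g` and `f ⊗ g`.
-/

open MeasureTheory Set Filter Topology Finset
open scoped ENNReal RealInnerProductSpace

theorem tendsto_cesaro_zero_of_tendsto_cesaro_sq {u : ℕ → ℝ} {M : ℝ} (hM : ∀ k, |u k| ≤ M)
    (h : Tendsto (fun m : ℕ => (∑ k ∈ range (m ^ 2), u k) / (m ^ 2 : ℕ)) atTop (𝓝 0)) :
    Tendsto (fun N : ℕ => (∑ k ∈ range N, u k) / N) atTop (𝓝 0) := by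
  set S : ℕ → ℝ := fun N => ∑ k ∈ range N, u k
  have hM0 : 0 ≤ M := (abs_nonneg _).trans (hM 0)
  have key : ∀ N, 0 < N → |S N / N| ≤ |S (N.sqrt ^ 2) / (N.sqrt ^ 2 : ℕ)| + 3 * M / N.sqrt := by
    intro N hN
    set m := N.sqrt
    have hm : 0 < m := Nat.sqrt_pos.2 hN
    have hmN : m ^ 2 ≤ N := Nat.sqrt_le' N
    have hNm : N - m ^ 2 ≤ 3 * m := by
      have h1 : N < (m + 1) ^ 2 := Nat.lt_succ_sqrt' N
      have h2 : (m + 1) ^ 2 = m ^ 2 + 2 * m + 1 := by ring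
      omega
    have hdiff : |S N - S (m ^ 2)| ≤ 3 * m * M := by
      rw [← Finset.sum_Ico_eq_sub _ hmN]
      calc |∑ k ∈ Ico (m ^ 2) N, u k| ≤ ∑ k ∈ Ico (m ^ 2) N, M :=
            (abs_sum_le_sum_abs _ _).trans (sum_le_sum fun k _ => hM k)
        _ = (N - m ^ 2 : ℕ) * M := by simp
        _ ≤ 3 * m * M := by gcongr; exact_mod_cast hNm
    have hm' : (0 : ℝ) < m := by exact_mod_cast hm
    have hmN' : ((m ^ 2 : ℕ) : ℝ) ≤ N := by exact_mod_cast hmN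
    have hm2 : (0 : ℝ) < (m ^ 2 : ℕ) := by positivity
    calc |S N / N| = |S N| / N := by rw [abs_div, Nat.abs_cast]
      _ ≤ (|S (m ^ 2)| + 3 * m * M) / N := by
          gcongr; linarith [abs_sub_abs_le_abs_sub (S N) (S (m ^ 2))]
      _ = |S (m ^ 2)| / N + 3 * M * (m / N) := by ring
      _ ≤ |S (m ^ 2)| / (m ^ 2 : ℕ) + 3 * M * (m / (m ^ 2 : ℕ)) := by gcongr
      _ = |S (m ^ 2) / (m ^ 2 : ℕ)| + 3 * M / m := by
          rw [abs_div, Nat.abs_cast]; push_cast; field_simp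
  have hsqrt : Tendsto Nat.sqrt atTop atTop :=
    tendsto_atTop_atTop.2 fun b => ⟨b * b, fun N hN => Nat.le_sqrt.2 hN⟩
  have hbound : Tendsto (fun N : ℕ => |S (N.sqrt ^ 2) / (N.sqrt ^ 2 : ℕ)| + 3 * M / N.sqrt)
      atTop (𝓝 0) := by
    simpa using (h.abs.comp hsqrt).add
      ((tendsto_const_div_atTop_nhds_zero_nat (3 * M)).comp hsqrt)
  exact (tendsto_zero_iff_abs_tendsto_zero _).2 <|
    squeeze_zero' (Eventually.of_forall fun _ => abs_nonneg _)
      ((eventually_gt_atTop 0).mono key) hbound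

theorem tendsto_cesaro_const_add {a : ℝ} {u : ℕ → ℝ}
    (hu : Tendsto (fun N : ℕ => (∑ k ∈ range N, u k) / N) atTop (𝓝 0)) :
    Tendsto (fun N : ℕ => (∑ k ∈ range N, (a + u k)) / N) atTop (𝓝 a) := by
  have h : ∀ᶠ N : ℕ in atTop,
      a + (∑ k ∈ range N, u k) / N = (∑ k ∈ range N, (a + u k)) / N := by
    filter_upwards [eventually_gt_atTop 0] with N hN
    rw [sum_add_distrib, sum_const, card_range, nsmul_eq_mul, add_div,
      mul_div_cancel_left₀ _ (by positivity)]
  simpa using (hu.const_add a).congr' h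

theorem tendsto_cesaro_const_add_mul_const_add {a b : ℝ} {u v : ℕ → ℝ}
    (hu : Tendsto (fun N : ℕ => (∑ k ∈ range N, u k) / N) atTop (𝓝 0))
    (hv : Tendsto (fun N : ℕ => (∑ k ∈ range N, v k) / N) atTop (𝓝 0))
    (huv : Tendsto (fun N : ℕ => (∑ k ∈ range N, u k * v k) / N) atTop (𝓝 0)) :
    Tendsto (fun N : ℕ => (∑ k ∈ range N, (a + u k) * (b + v k)) / N) atTop (𝓝 (a * b)) := by
  have hw : Tendsto (fun N : ℕ => (∑ k ∈ range N, (a * v k + b * u k + u k * v k)) / N)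
      atTop (𝓝 0) := by
    simpa [sum_add_distrib, ← mul_sum, add_div, mul_div_assoc] using
      ((hv.const_mul a).add (hu.const_mul b)).add huv
  convert tendsto_cesaro_const_add (a := a * b) hw using 4 with N k
  ring

theorem exists_strictMono_sum_abs_le_two {c : ℕ → ℕ → ℝ}
    (hc : ∀ j, Tendsto (fun n => c n j) atTop (𝓝 0)) :
    ∃ ψ : ℕ → ℕ, StrictMono ψ ∧ ∀ k, ∑ j ∈ range k, |c (ψ k) (ψ j)| ≤ 2 := by
  obtain ⟨ψ, -, hψ⟩ := exists_seq_of_forall_finset_exists (fun _ => True)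
    (fun j n => j < n ∧ |c n j| ≤ (1 / 2) ^ j) fun s _ => by
      have : ∀ᶠ n in atTop, ∀ j ∈ s, j < n ∧ |c n j| ≤ (1 / 2) ^ j :=
        (eventually_all_finset s).2 fun j _ => (eventually_gt_atTop j).and <|
          (tendsto_zero_iff_abs_tendsto_zero _).1 (hc j) |>.eventually_le_const (by positivity)
      obtain ⟨n, hn⟩ := this.exists
      exact ⟨n, trivial, hn⟩
  have hmono : StrictMono ψ := fun j k h => (hψ j k h).1
  refine ⟨ψ, hmono, fun k => (sum_le_sum fun j hj => ?_).trans (sum_geometric_two_le k)⟩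
  exact (hψ j k (mem_range.1 hj)).2.trans
    (pow_le_pow_of_le_one (by norm_num) (by norm_num) (hmono.id_le j))

theorem exists_subseq_tendsto_inner {H : Type*} [NormedAddCommGroup H] [InnerProductSpace ℝ H]
    [CompleteSpace H] [TopologicalSpace.SeparableSpace H] (a : ℕ → H) {C : ℝ}
    (hC : ∀ n, ‖a n‖ ≤ C) :
    ∃ φ : ℕ → ℕ, StrictMono φ ∧ ∃ v : H,
      ∀ u, Tendsto (fun n => ⟪a (φ n), u⟫) atTop (𝓝 ⟪v, u⟫) := by
  obtain ⟨L, -, φ, hφ, hL⟩ := WeakDual.isSeqCompact_closedBall ℝ H 0 C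
    (x := fun n => StrongDual.toWeakDual (InnerProductSpace.toDual ℝ H (a n)))
    (fun n => by simpa using hC n)
  refine ⟨φ, hφ, (InnerProductSpace.toDual ℝ H).symm (WeakDual.toStrongDual L), fun u => ?_⟩
  rw [InnerProductSpace.toDual_symm_apply]
  exact tendsto_iff_forall_eval_tendsto_topDualPairing.mp hL u

section Measure

variable {α : Type*} [MeasurableSpace α] {μ : Measure α}

theorem ae_tendsto_zero_of_summable_integral_norm {E : Type*} [NormedAddCommGroup E]
    {f : ℕ → α → E} (hf : ∀ n, Integrable (f n) μ)
    (hs : Summable fun n => ∫ x, ‖f n x‖ ∂μ) :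
    ∀ᵐ x ∂μ, Tendsto (fun n => f n x) atTop (𝓝 0) := by
  have hnorm : ∀ n, eLpNorm (f n) 1 μ = ENNReal.ofReal (∫ x, ‖f n x‖ ∂μ) := fun n => by
    rw [eLpNorm_one_eq_lintegral_enorm, ofReal_integral_norm_eq_lintegral_enorm (hf n)]
  have hfin : ∑' n, eLpNorm (f n) 1 μ ≠ ∞ := by
    simp_rw [hnorm]
    rw [← ENNReal.ofReal_tsum_of_nonneg (fun n => integral_nonneg fun _ => norm_nonneg _) hs]
    exact ENNReal.ofReal_ne_top
  filter_upwards [summable_norm_of_tsum_eLpNorm_ne_top le_rfl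
    (fun n => (hf n).aestronglyMeasurable) hfin] with x hx
  exact tendsto_zero_iff_norm_tendsto_zero.2 hx.tendsto_atTop_zero

theorem integral_sq_sum_le {r : ℕ → α → ℝ} (hr : ∀ k, MemLp (r k) 2 μ) {M C : ℝ}
    (hM : ∀ k, ∫ x, r k x ^ 2 ∂μ ≤ M)
    (hC : ∀ k, ∑ j ∈ range k, |∫ x, r k x * r j x ∂μ| ≤ C) (N : ℕ) :
    ∫ x, (∑ k ∈ range N, r k x) ^ 2 ∂μ ≤ (M + 2 * C) * N := by
  induction N with
  | zero => simp
  | succ N ih =>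
    have hS : MemLp (fun x => ∑ k ∈ range N, r k x) 2 μ := memLp_finsetSum _ fun k _ => hr k
    have hcross : ∀ j, Integrable (fun x => r N x * r j x) μ := fun j =>
      (hr N).integrable_mul (hr j)
    have hexpand : ∫ x, (∑ k ∈ range (N + 1), r k x) ^ 2 ∂μ = ∫ x, (∑ k ∈ range N, r k x) ^ 2 ∂μ
        + 2 * ∑ j ∈ range N, ∫ x, r N x * r j x ∂μ + ∫ x, r N x ^ 2 ∂μ := by
      rw [← integral_finsetSum _ fun j _ => hcross j, ← integral_const_mul,
        ← integral_add hS.integrable_sq ((integrable_finsetSum _ fun j _ => hcross j).const_mul 2),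
        ← integral_add _ (hr N).integrable_sq]
      · congr 1; ext x; simp only [sum_range_succ, ← mul_sum]; ring
      · exact hS.integrable_sq.add ((integrable_finsetSum _ fun j _ => hcross j).const_mul 2)
    have hcrossC : ∑ j ∈ range N, ∫ x, r N x * r j x ∂μ ≤ C :=
      (sum_le_sum fun j _ => le_abs_self _).trans (hC N)
    rw [hexpand]
    push_cast
    linarith [hM N]

theorem abs_integral_mul_le [IsFiniteMeasure μ] {f g : α → ℝ} {M : ℝ} (hf : ∀ x, |f x| ≤ M)
    (hg : ∀ x, |g x| ≤ M) : |∫ x, f x * g x ∂μ| ≤ M ^ 2 * μ.real univ := by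
  rw [← Real.norm_eq_abs]
  refine norm_integral_le_of_norm_le_const (ae_of_all μ fun x => ?_)
  rw [Real.norm_eq_abs, abs_mul, sq]
  exact mul_le_mul (hf x) (hg x) (abs_nonneg _) ((abs_nonneg _).trans (hf x))

theorem ae_tendsto_cesaro_zero_of_sum_abs_integral_mul_le [IsFiniteMeasure μ] {r : ℕ → α → ℝ}
    (hr : ∀ k, Measurable (r k)) {M C : ℝ} (hM : ∀ k x, |r k x| ≤ M)
    (hC : ∀ k, ∑ j ∈ range k, |∫ x, r k x * r j x ∂μ| ≤ C) :
    ∀ᵐ x ∂μ, Tendsto (fun N : ℕ => (∑ k ∈ range N, r k x) / N) atTop (𝓝 0) := by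
  set S : ℕ → α → ℝ := fun N x => ∑ k ∈ range N, r k x
  set K := M ^ 2 * μ.real univ + 2 * C
  have hL2 : ∀ k, MemLp (r k) 2 μ := fun k =>
    MemLp.of_bound (hr k).aestronglyMeasurable M (ae_of_all _ (hM k))
  have hsq : ∀ k, ∫ x, r k x ^ 2 ∂μ ≤ M ^ 2 * μ.real univ := fun k => by
    simpa only [sq] using (le_abs_self _).trans (abs_integral_mul_le (hM k) (hM k))
  have hSL2 : ∀ N, MemLp (S N) 2 μ := fun N => memLp_finsetSum _ fun k _ => hL2 k
  have hS : ∀ N, ∫ x, S N x ^ 2 ∂μ ≤ K * N := integral_sq_sum_le hL2 hsq hC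
  have hsquares : ∀ᵐ x ∂μ, Tendsto (fun m : ℕ => (S (m ^ 2) x / (m ^ 2 : ℕ)) ^ 2) atTop (𝓝 0) := by
    refine ae_tendsto_zero_of_summable_integral_norm (fun m => ?_) ?_
    · simpa only [div_pow] using (hSL2 _).integrable_sq.div_const _
    refine Summable.of_nonneg_of_le (fun m => integral_nonneg fun _ => norm_nonneg _)
      (fun m => ?_) ((Real.summable_one_div_nat_pow.2 one_lt_two).mul_left K)
    simp only [Real.norm_eq_abs, div_pow, abs_div, abs_pow, sq_abs]
    rw [integral_div]
    rcases Nat.eq_zero_or_pos m with rfl | hm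
    · simp
    · have hm' : (0 : ℝ) < m := by exact_mod_cast hm
      calc (∫ x, S (m ^ 2) x ^ 2 ∂μ) / ((m ^ 2 : ℕ) : ℝ) ^ 2
          ≤ K * (m ^ 2 : ℕ) / ((m ^ 2 : ℕ) : ℝ) ^ 2 := by gcongr; exact hS _
        _ = K * (1 / (m : ℝ) ^ 2) := by push_cast; field_simp
  filter_upwards [hsquares] with x hx
  refine tendsto_cesaro_zero_of_tendsto_cesaro_sq (fun k => hM k x) ?_
  rw [tendsto_zero_iff_abs_tendsto_zero]
  have := (Real.continuous_sqrt.tendsto 0).comp hx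
  simpa only [Function.comp_def, Real.sqrt_sq_eq_abs, Real.sqrt_zero] using this

theorem exists_strictMono_ae_tendsto_cesaro_zero {β : Type*} [MeasurableSpace β] {ν : Measure β}
    [IsFiniteMeasure μ] [IsFiniteMeasure ν] {r : ℕ → α → ℝ} {s : ℕ → β → ℝ}
    (hr : ∀ n, Measurable (r n)) (hs : ∀ n, Measurable (s n)) {M : ℝ}
    (hrM : ∀ n x, |r n x| ≤ M) (hsM : ∀ n y, |s n y| ≤ M)
    (hr0 : ∀ j, Tendsto (fun n => ∫ x, r n x * r j x ∂μ) atTop (𝓝 0))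
    (hs0 : ∀ j, Tendsto (fun n => ∫ y, s n y * s j y ∂ν) atTop (𝓝 0)) :
    ∃ ψ : ℕ → ℕ, StrictMono ψ ∧
      (∀ᵐ x ∂μ, Tendsto (fun N : ℕ => (∑ k ∈ range N, r (ψ k) x) / N) atTop (𝓝 0)) ∧
      (∀ᵐ y ∂ν, Tendsto (fun N : ℕ => (∑ k ∈ range N, s (ψ k) y) / N) atTop (𝓝 0)) ∧
      ∀ᵐ p ∂μ.prod ν,
        Tendsto (fun N : ℕ => (∑ k ∈ range N, r (ψ k) p.1 * s (ψ k) p.2) / N) atTop (𝓝 0) := by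
  obtain ⟨ψ, hψ, hsum⟩ := exists_strictMono_sum_abs_le_two
    (c := fun n j => |∫ x, r n x * r j x ∂μ| + |∫ y, s n y * s j y ∂ν|)
    fun j => by simpa using (hr0 j).abs.add (hs0 j).abs
  have hle : ∀ a b : ℝ, |a| ≤ |(|a| + |b|)| ∧ |b| ≤ |(|a| + |b|)| := fun a b =>
    ⟨(le_add_of_nonneg_right (abs_nonneg b)).trans (le_abs_self _),
      (le_add_of_nonneg_left (abs_nonneg a)).trans (le_abs_self _)⟩
  have hrψ : ∀ k, ∑ j ∈ range k, |∫ x, r (ψ k) x * r (ψ j) x ∂μ| ≤ 2 := fun k =>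
    (sum_le_sum fun j _ => (hle _ _).1).trans (hsum k)
  have hsψ : ∀ k, ∑ j ∈ range k, |∫ y, s (ψ k) y * s (ψ j) y ∂ν| ≤ 2 := fun k =>
    (sum_le_sum fun j _ => (hle _ _).2).trans (hsum k)
  have hrsψ : ∀ k, ∑ j ∈ range k, |∫ p, r (ψ k) p.1 * s (ψ k) p.2 * (r (ψ j) p.1 * s (ψ j) p.2)
      ∂μ.prod ν| ≤ 2 * (M ^ 2 * ν.real univ) := by
    intro k
    calc _ = ∑ j ∈ range k, |∫ x, r (ψ k) x * r (ψ j) x ∂μ| * |∫ y, s (ψ k) y * s (ψ j) y ∂ν| := by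
          refine sum_congr rfl fun j _ => ?_
          rw [← abs_mul, ← integral_prod_mul]
          congr 2; ext p; ring
      _ ≤ ∑ j ∈ range k, |∫ x, r (ψ k) x * r (ψ j) x ∂μ| * (M ^ 2 * ν.real univ) :=
          sum_le_sum fun j _ => mul_le_mul_of_nonneg_left
            (abs_integral_mul_le (hsM _) (hsM _)) (abs_nonneg _)
      _ ≤ 2 * (M ^ 2 * ν.real univ) := by
          rw [← sum_mul]; exact mul_le_mul_of_nonneg_right (hrψ k) (by positivity)
  refine ⟨ψ, hψ,
    ae_tendsto_cesaro_zero_of_sum_abs_integral_mul_le (fun k => hr _) (fun k => hrM _) hrψ,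
    ae_tendsto_cesaro_zero_of_sum_abs_integral_mul_le (fun k => hs _) (fun k => hsM _) hsψ,
    ae_tendsto_cesaro_zero_of_sum_abs_integral_mul_le (M := M * M)
      (fun k => ((hr _).comp measurable_fst).mul ((hs _).comp measurable_snd))
      (fun k p => ?_) hrsψ⟩
  rw [abs_mul]
  exact mul_le_mul (hrM _ _) (hsM _ _) (abs_nonneg _) ((abs_nonneg _).trans (hrM 0 p.1))

theorem exists_subseq_integral_indicator_sub_mul_tendsto_zero
    [MeasurableSpace.CountablyGenerated α] [IsFiniteMeasure μ]
    {a : ℕ → Set α} (ha : ∀ n, MeasurableSet (a n)) :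
    ∃ φ : ℕ → ℕ, StrictMono φ ∧ ∃ f : α → ℝ, Measurable f ∧ (∀ x, f x ∈ Icc (0 : ℝ) 1) ∧
      ∀ u, MemLp u 2 μ → Tendsto (fun n =>
        ∫ x, ((a (φ n)).indicator (fun _ => (1 : ℝ)) x - f x) * u x ∂μ) atTop (𝓝 0) := by
  set χ : ℕ → Lp ℝ 2 μ := fun n => indicatorConstLp 2 (ha n) (measure_ne_top μ _) 1
  have hχ : ∀ n, ‖χ n‖ ≤ μ.real univ ^ (1 / 2 : ℝ) := fun n =>
    norm_indicatorConstLp_le.trans <| by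
      simpa using Real.rpow_le_rpow measureReal_nonneg (measureReal_mono (subset_univ (a n)))
        (by norm_num : (0 : ℝ) ≤ 1 / 2)
  have : Fact ((2 : ℝ≥0∞) ≠ ∞) := ⟨ENNReal.ofNat_ne_top⟩
  have : TopologicalSpace.SeparableSpace (Lp ℝ 2 μ) :=
    TopologicalSpace.SecondCountableTopology.to_separableSpace
  obtain ⟨φ, hφ, v, hv⟩ := exists_subseq_tendsto_inner χ hχ
  have hv_setIntegral : ∀ s, MeasurableSet s → ∫ x in s, v x ∂μ ∈ Icc 0 (μ.real s) := by
    intro s hs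
    have h := hv (indicatorConstLp 2 hs (measure_ne_top μ s) 1)
    rw [real_inner_comm, L2.inner_indicatorConstLp_one] at h
    simp only [χ, L2.real_inner_indicatorConstLp_one_indicatorConstLp_one] at h
    exact isClosed_Icc.mem_of_tendsto h (Eventually.of_forall fun n =>
      ⟨measureReal_nonneg, measureReal_mono Set.inter_subset_right⟩)
  have hv_int : Integrable v μ := (Lp.memLp v).integrable (by norm_num)
  have hv0 : 0 ≤ᵐ[μ] v := ae_nonneg_of_forall_setIntegral_nonneg hv_int fun s hs _ =>
    (hv_setIntegral s hs).1
  have hv1 : v ≤ᵐ[μ] fun _ => 1 := ae_le_of_forall_setIntegral_le hv_int (integrable_const 1)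
    fun s hs _ => by simpa using (hv_setIntegral s hs).2
  set f : α → ℝ := fun x => max 0 (min 1 (v x))
  have hfv : f =ᵐ[μ] v := by
    filter_upwards [hv0, hv1] with x h0 h1
    simp only [f, min_eq_right h1]
    exact max_eq_right h0
  refine ⟨φ, hφ, f,
    measurable_const.max (measurable_const.min (Lp.stronglyMeasurable v).measurable),
    fun x => ⟨le_max_left _ _, max_le zero_le_one (min_le_left _ _)⟩, fun u hu => ?_⟩
  have h := (hv (hu.toLp u)).sub_const ⟪v, hu.toLp u⟫
  rw [sub_self] at h
  refine h.congr fun n => ?_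
  rw [← inner_sub_left, L2.inner_def]
  refine integral_congr_ae ?_
  filter_upwards [Lp.coeFn_sub (χ (φ n)) v,
    indicatorConstLp_coeFn (p := 2) (hs := ha (φ n)) (c := (1 : ℝ)), hu.coeFn_toLp, hfv]
    with x h1 h2 h3 h4
  rw [Real.inner_apply, h1, Pi.sub_apply, h2, h3, h4]

end Measure

theorem abs_indicator_one_sub_le_one {X : Type*} {s : Set X} {x : X} {t : ℝ}
    (ht : t ∈ Icc (0 : ℝ) 1) : |s.indicator (fun _ => (1 : ℝ)) x - t| ≤ 1 := by
  rw [abs_le]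
  by_cases hx : x ∈ s <;>
    simp only [hx, indicator_of_mem, indicator_of_notMem, not_false_eq_true] <;>
    constructor <;> linarith [ht.1, ht.2]

theorem stmt2_general (A B : ℕ → Set ℝ)
    (hAm : ∀ n, MeasurableSet (A n)) (hBm : ∀ n, MeasurableSet (B n)) :
    ∃ φ : ℕ → ℕ, StrictMono φ ∧
    ∃ f g : ℝ → ℝ, ∃ h : ℝ × ℝ → ℝ,
      (∀ᵐ x ∂(volume.restrict (Ioo (0:ℝ) 1)),
        Tendsto (fun n =>
            (∑ k ∈ Finset.range n, (A (φ k)).indicator (fun _ => (1:ℝ)) x) / n)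
          atTop (nhds (f x))) ∧
      (∀ᵐ y ∂(volume.restrict (Ioo (0:ℝ) 1)),
        Tendsto (fun n =>
            (∑ k ∈ Finset.range n, (B (φ k)).indicator (fun _ => (1:ℝ)) y) / n)
          atTop (nhds (g y))) ∧
      (∀ᵐ p ∂((volume.restrict (Ioo (0:ℝ) 1)).prod
          (volume.restrict (Ioo (0:ℝ) 1))),
        Tendsto (fun n =>
            (∑ k ∈ Finset.range n,
              ((A (φ k)) ×ˢ (B (φ k))).indicator (fun _ => (1:ℝ)) p) / n)
          atTop (nhds (h p))) ∧
      (∀ᵐ p ∂((volume.restrict (Ioo (0:ℝ) 1)).prod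
          (volume.restrict (Ioo (0:ℝ) 1))),
        h p = f p.1 * g p.2) := by
  set μ : Measure ℝ := volume.restrict (Ioo (0 : ℝ) 1)
  have : IsFiniteMeasure μ := isFiniteMeasure_restrict.2 measure_Ioo_lt_top.ne
  obtain ⟨φ₁, hφ₁, f, hf, hf01, hfA⟩ :=
    exists_subseq_integral_indicator_sub_mul_tendsto_zero (μ := μ) hAm
  obtain ⟨φ₂, hφ₂, g, hg, hg01, hgB⟩ :=
    exists_subseq_integral_indicator_sub_mul_tendsto_zero (μ := μ) fun n => hBm (φ₁ n)
  set r : ℕ → ℝ → ℝ := fun n x => (A (φ₁ (φ₂ n))).indicator (fun _ => 1) x - f x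
  set s : ℕ → ℝ → ℝ := fun n y => (B (φ₁ (φ₂ n))).indicator (fun _ => 1) y - g y
  have hr : ∀ n, Measurable (r n) := fun n => (measurable_const.indicator (hAm _)).sub hf
  have hs : ∀ n, Measurable (s n) := fun n => (measurable_const.indicator (hBm _)).sub hg
  have hrM : ∀ n x, |r n x| ≤ 1 := fun n x => abs_indicator_one_sub_le_one (hf01 x)
  have hsM : ∀ n y, |s n y| ≤ 1 := fun n y => abs_indicator_one_sub_le_one (hg01 y)
  obtain ⟨ψ, hψ, hrψ, hsψ, hrsψ⟩ := exists_strictMono_ae_tendsto_cesaro_zero hr hs hrM hsM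
    (fun j => (hfA _ (.of_bound (hr j).aestronglyMeasurable 1 (ae_of_all _ (hrM j)))).comp
      hφ₂.tendsto_atTop)
    (fun j => hgB _ (.of_bound (hs j).aestronglyMeasurable 1 (ae_of_all _ (hsM j))))
  refine ⟨φ₁ ∘ φ₂ ∘ ψ, hφ₁.comp (hφ₂.comp hψ), f, g, fun p => f p.1 * g p.2, ?_, ?_, ?_,
    ae_of_all _ fun _ => rfl⟩
  · filter_upwards [hrψ] with x hx
    simpa [r] using tendsto_cesaro_const_add (a := f x) hx
  · filter_upwards [hsψ] with y hy
    simpa [s] using tendsto_cesaro_const_add (a := g y) hy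
  · filter_upwards [Measure.quasiMeasurePreserving_fst.ae hrψ,
      Measure.quasiMeasurePreserving_snd.ae hsψ, hrsψ] with p h1 h2 h3
    obtain ⟨x, y⟩ := p
    simpa [r, s, ← Pi.one_def, Set.indicator_prod_one] using
      tendsto_cesaro_const_add_mul_const_add (a := f x) (b := g y) h1 h2 h3

theorem stmt2 (A B : ℕ → Set ℝ)
    (hAm : ∀ n, MeasurableSet (A n)) (hBm : ∀ n, MeasurableSet (B n))
    (hAsub : ∀ n, A n ⊆ Ioo (0:ℝ) 1) (hBsub : ∀ n, B n ⊆ Ioo (0:ℝ) 1) :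
    ∃ φ : ℕ → ℕ, StrictMono φ ∧
    ∃ f g : ℝ → ℝ, ∃ h : ℝ × ℝ → ℝ,
      (∀ᵐ x ∂(volume.restrict (Ioo (0:ℝ) 1)),
        Tendsto (fun n =>
            (∑ k ∈ Finset.range n, (A (φ k)).indicator (fun _ => (1:ℝ)) x) / n)
          atTop (nhds (f x))) ∧
      (∀ᵐ y ∂(volume.restrict (Ioo (0:ℝ) 1)),
        Tendsto (fun n =>
            (∑ k ∈ Finset.range n, (B (φ k)).indicator (fun _ => (1:ℝ)) y) / n)
          atTop (nhds (g y))) ∧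
      (∀ᵐ p ∂((volume.restrict (Ioo (0:ℝ) 1)).prod
          (volume.restrict (Ioo (0:ℝ) 1))),
        Tendsto (fun n =>
            (∑ k ∈ Finset.range n,
              ((A (φ k)) ×ˢ (B (φ k))).indicator (fun _ => (1:ℝ)) p) / n)
          atTop (nhds (h p))) ∧
      (∀ᵐ p ∂((volume.restrict (Ioo (0:ℝ) 1)).prod
          (volume.restrict (Ioo (0:ℝ) 1))),
        h p = f p.1 * g p.2) :=
  stmt2_general A B hAm hBm
end

section
/- Let W ⊆ (0,1)×(0,1) be a countable union of countable intersections of finite unions of measurable rectangles (class A_{δσ}), such that W ∩ (A×B) ≠ ∅ for all measurable sets A, B ⊆ (0,1) of positive Lebesgue measure. Then there exists a probability measure m on (0,1)×(0,1) with m(W) = 1 and both marginals of m bounded by Lebesgue measure (hence equal to Lebesgue measure). -/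
open MeasureTheory Set
open scoped ENNReal

noncomputable section

/-- A finite union of measurable rectangles `U ×ˢ V` with
`U, V` Borel subsets of `(0,1)`. -/
def IsFinUnionRect (S : Set (ℝ × ℝ)) : Prop :=
  ∃ (n : ℕ) (R : Fin n → Set (ℝ × ℝ)),
    (∀ k, ∃ U V : Set ℝ, MeasurableSet U ∧ MeasurableSet V ∧
      U ⊆ Ioo (0:ℝ) 1 ∧ V ⊆ Ioo (0:ℝ) 1 ∧ R k = U ×ˢ V) ∧
    S = ⋃ k, R k

/-- The class `A_{δσ}`: countable unions of countable intersections of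
members of the algebra generated by measurable rectangles. -/
def MemADeltaSigma (W : Set (ℝ × ℝ)) : Prop :=
  ∃ G : ℕ → ℕ → Set (ℝ × ℝ),
    (∀ i j, IsFinUnionRect (G i j)) ∧ W = ⋃ i, ⋂ j, G i j

/-!
Call `m` a subcoupling of `κ₁, κ₂` when its marginals are bounded by `κ₁` and `κ₂`. Adding, one
after another, near-optimal subcouplings of the remaining marginals restricted to `W` saturates
the marginals, as long as any two nonzero measures `κ₁, κ₂ ≤ Leb|(0,1)` have a subcoupling
charging `W`.

For that, shrink `κᵢ` to multiples of Lebesgue measure on sets `Aᵢ` and suppose all their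
subcouplings ignore `W`. A greedy product construction shows that a finite union of rectangles
`S` with no subcoupling giving it mass `c / 3` misses a rectangle `A ×ˢ B` with
`κ₁ Aᶜ + κ₂ Bᶜ < c`. Uniform tightness and an ultrafilter limit of subcouplings make some finite
stage of each `A_δ` piece of `W` uniformly small, and intersecting the resulting rectangles over
the countably many pieces yields a rectangle of positive measure inside `A₁ × A₂` that misses
`W`, contradicting the hypothesis.
-/

open Filter Topology

namespace MeasureTheory

namespace Measure

variable {X Y : Type*} [MeasurableSpace X] [MeasurableSpace Y]

def IsSubcoupling (m : Measure (X × Y)) (κ₁ : Measure X) (κ₂ : Measure Y) : Prop :=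
  m.map Prod.fst ≤ κ₁ ∧ m.map Prod.snd ≤ κ₂

lemma smul_le_self_of_le_one {μ : Measure X} {c : ℝ≥0∞} (hc : c ≤ 1) : c • μ ≤ μ :=
  le_iff'.2 fun s => by simpa using mul_le_of_le_one_left zero_le hc

lemma map_sum_le_of_forall {Z : Type*} [MeasurableSpace Z] {f : X → Z} (hf : Measurable f)
    {p : ℕ → Measure X} {κ : Measure Z}
    (h : ∀ n, (∑ k ∈ Finset.range n, p k).map f ≤ κ) : (Measure.sum p).map f ≤ κ := by
  refine le_iff.2 fun s hs => ?_
  rw [map_apply hf hs, sum_apply _ (hf hs), ENNReal.tsum_eq_iSup_nat]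
  refine iSup_le fun n => ?_
  simpa [map_apply hf hs, finsetSum_apply] using h n s

lemma apply_le_sub_apply_add_measure_univ {μ ν : Measure X} [IsFiniteMeasure ν]
    (h : ν ≤ μ) (s : Set X) : μ s ≤ (μ - ν) s + ν univ := by
  conv_lhs => rw [← Measure.sub_add_cancel_of_le h]
  exact add_le_add le_rfl (measure_mono (subset_univ s))

lemma sub_le_sub_left {μ ν ν' : Measure X} (h : ν ≤ ν') : μ - ν' ≤ μ - ν := by
  rw [Measure.sub_def, Measure.sub_def]
  exact sInf_le_sInf fun d (hd : μ ≤ d + ν) => hd.trans (add_le_add_right h d)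

lemma sub_ne_zero_of_le_of_ne {μ ν : Measure X} [IsFiniteMeasure ν] (h : ν ≤ μ)
    (hne : ν ≠ μ) : μ - ν ≠ 0 := fun h0 =>
  hne (le_antisymm h (by simpa using (Measure.sub_le_iff_le_add_of_le h).1 h0.le))

lemma exists_smul_restrict_le_of_le {μ κ : Measure X}
    [IsFiniteMeasure μ] (hκμ : κ ≤ μ) (hκ : κ ≠ 0) :
    ∃ E, MeasurableSet E ∧ 0 < μ E ∧ ∃ δ : ℝ≥0∞, δ ≠ 0 ∧ δ • μ.restrict E ≤ κ := by
  have : IsFiniteMeasure κ := isFiniteMeasure_of_le μ hκμ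
  obtain ⟨ε, hε, E, hE, hμE, hεE⟩ := exists_positive_of_not_mutuallySingular κ μ fun h =>
    hκ (eq_zero_of_absolutelyContinuous_of_mutuallySingular hκμ.absolutelyContinuous h)
  refine ⟨E, hE, hμE, ε, by simpa using hε.ne', le_iff.2 fun A hA => ?_⟩
  rw [smul_apply, restrict_apply hA, smul_eq_mul]
  exact (hεE A hA).trans (measure_mono inter_subset_left)

lemma le_of_forall_isOpen_le {Z : Type*} [TopologicalSpace Z] [MeasurableSpace Z]
    {μ ν : Measure Z} [ν.OuterRegular] (h : ∀ U, IsOpen U → μ U ≤ ν U) : μ ≤ ν :=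
  Measure.le_iff'.2 fun s => by
    rw [s.measure_eq_iInf_isOpen ν]
    exact le_iInf₂ fun U hsU => le_iInf fun hU => (measure_mono hsU).trans (h U hU)

lemma exists_isSubcoupling_measure_univ_eq_min (μ : Measure X) (ν : Measure Y)
    [IsFiniteMeasure μ] [IsFiniteMeasure ν] :
    ∃ m : Measure (X × Y), m.IsSubcoupling μ ν ∧ m univ = min (μ univ) (ν univ) := by
  refine ⟨(max (μ univ) (ν univ))⁻¹ • μ.prod ν, ⟨?_, ?_⟩, ?_⟩
  · rw [Measure.map_smul, map_fst_prod, smul_smul]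
    refine smul_le_self_of_le_one ((mul_le_mul_left ?_ _).trans (ENNReal.inv_mul_le_one _))
    exact ENNReal.inv_le_inv.2 (le_max_right _ _)
  · rw [Measure.map_smul, map_snd_prod, smul_smul]
    refine smul_le_self_of_le_one ((mul_le_mul_left ?_ _).trans (ENNReal.inv_mul_le_one _))
    exact ENNReal.inv_le_inv.2 (le_max_left _ _)
  · rw [smul_apply, ← univ_prod_univ, prod_prod, smul_eq_mul]
    rcases le_total (μ univ) (ν univ) with h | h
    · rw [max_eq_right h, min_eq_left h]
      rcases eq_or_ne (ν univ) 0 with h0 | h0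
      · simp [h0, nonpos_iff_eq_zero.mp (h0 ▸ h)]
      · rw [mul_comm, mul_assoc, ENNReal.mul_inv_cancel h0 (measure_ne_top _ _), mul_one]
    · rw [max_eq_left h, min_eq_right h]
      rcases eq_or_ne (μ univ) 0 with h0 | h0
      · simp [h0, nonpos_iff_eq_zero.mp (h0 ▸ h)]
      · rw [← mul_assoc, ENNReal.inv_mul_cancel h0 (measure_ne_top _ _), one_mul]

namespace IsSubcoupling

variable {m m' : Measure (X × Y)} {κ₁ κ₁' : Measure X} {κ₂ κ₂' : Measure Y}

lemma zero : (0 : Measure (X × Y)).IsSubcoupling κ₁ κ₂ := by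
  simp [IsSubcoupling, Measure.zero_le]

lemma mono (h : m.IsSubcoupling κ₁ κ₂) (h₁ : κ₁ ≤ κ₁') (h₂ : κ₂ ≤ κ₂') :
    m.IsSubcoupling κ₁' κ₂' :=
  ⟨h.1.trans h₁, h.2.trans h₂⟩

lemma restrict (h : m.IsSubcoupling κ₁ κ₂) (s : Set (X × Y)) :
    (m.restrict s).IsSubcoupling κ₁ κ₂ :=
  ⟨(map_mono restrict_le_self measurable_fst).trans h.1,
    (map_mono restrict_le_self measurable_snd).trans h.2⟩

lemma add (h : m.IsSubcoupling κ₁ κ₂) (h' : m'.IsSubcoupling κ₁' κ₂') :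
    (m + m').IsSubcoupling (κ₁ + κ₁') (κ₂ + κ₂') := by
  constructor
  · rw [Measure.map_add _ _ measurable_fst]; exact add_le_add h.1 h'.1
  · rw [Measure.map_add _ _ measurable_snd]; exact add_le_add h.2 h'.2

lemma smul (h : m.IsSubcoupling κ₁ κ₂) (c : ℝ≥0∞) :
    (c • m).IsSubcoupling (c • κ₁) (c • κ₂) := by
  constructor
  · rw [Measure.map_smul]; exact smul_le_smul_left c h.1
  · rw [Measure.map_smul]; exact smul_le_smul_left c h.2

lemma measure_prod_univ_le (h : m.IsSubcoupling κ₁ κ₂) {A : Set X} (hA : MeasurableSet A) :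
    m (A ×ˢ univ) ≤ κ₁ A := by
  simpa [map_apply measurable_fst hA, prod_univ] using h.1 A

lemma measure_univ_prod_le (h : m.IsSubcoupling κ₁ κ₂) {B : Set Y} (hB : MeasurableSet B) :
    m (univ ×ˢ B) ≤ κ₂ B := by
  simpa [map_apply measurable_snd hB, univ_prod] using h.2 B

lemma isFiniteMeasure [IsFiniteMeasure κ₁] (h : m.IsSubcoupling κ₁ κ₂) : IsFiniteMeasure m :=
  ⟨by simpa using (h.measure_prod_univ_le MeasurableSet.univ).trans_lt (measure_lt_top κ₁ univ)⟩

lemma add_of_sub [IsFiniteMeasure κ₁] [IsFiniteMeasure κ₂] (h : m.IsSubcoupling κ₁ κ₂)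
    (h' : m'.IsSubcoupling (κ₁ - m.map Prod.fst) (κ₂ - m.map Prod.snd)) :
    (m + m').IsSubcoupling κ₁ κ₂ := by
  have : IsFiniteMeasure (m.map Prod.fst) := isFiniteMeasure_of_le κ₁ h.1
  have : IsFiniteMeasure (m.map Prod.snd) := isFiniteMeasure_of_le κ₂ h.2
  have hm : m.IsSubcoupling (m.map Prod.fst) (m.map Prod.snd) := ⟨le_rfl, le_rfl⟩
  simpa only [add_comm (m.map _), sub_add_cancel_of_le h.1, sub_add_cancel_of_le h.2]
    using hm.add h'

lemma sum {p : ℕ → Measure (X × Y)}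
    (h : ∀ n, (∑ k ∈ Finset.range n, p k).IsSubcoupling κ₁ κ₂) :
    (Measure.sum p).IsSubcoupling κ₁ κ₂ :=
  ⟨map_sum_le_of_forall measurable_fst fun n => (h n).1,
    map_sum_le_of_forall measurable_snd fun n => (h n).2⟩

lemma measure_prod_eq_measure_univ {U : Set X} {V : Set Y} (hU : MeasurableSet U)
    (hV : MeasurableSet V) (h : m.IsSubcoupling (κ₁.restrict U) (κ₂.restrict V)) :
    m (U ×ˢ V) = m univ := by
  have hcompl : m (U ×ˢ V)ᶜ = 0 := by
    refine measure_mono_null (compl_prod_eq_union U V).le (measure_union_null ?_ ?_)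
    · simpa [restrict_apply hU.compl] using h.measure_prod_univ_le hU.compl
    · simpa [restrict_apply hV.compl] using h.measure_univ_prod_le hV.compl
  rw [← measure_add_measure_compl (hU.prod hV), hcompl, add_zero]

lemma map_eq_of_saturated {σ₁ : Measure X} {σ₂ : Measure Y} [IsFiniteMeasure σ₁]
    [IsFiniteMeasure σ₂] (h : m.IsSubcoupling σ₁ σ₂) (huniv : σ₁ univ = σ₂ univ)
    (hsat : m.map Prod.fst = σ₁ ∨ m.map Prod.snd = σ₂) :
    m.map Prod.fst = σ₁ ∧ m.map Prod.snd = σ₂ := by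
  have : IsFiniteMeasure m := h.isFiniteMeasure
  have hmass : m.map Prod.fst univ = m.map Prod.snd univ := by
    simp [Measure.map_apply measurable_fst .univ, Measure.map_apply measurable_snd .univ]
  rcases hsat with h₁ | h₂
  · exact ⟨h₁, Measure.eq_of_le_of_measure_univ_eq h.2 (by rw [← hmass, h₁, huniv])⟩
  · exact ⟨Measure.eq_of_le_of_measure_univ_eq h.1 (by rw [hmass, h₂, huniv]), h₂⟩

end IsSubcoupling

end Measure

section

variable {X Y : Type*} [MeasurableSpace X] [MeasurableSpace Y] {κ₁ : Measure X} {κ₂ : Measure Y}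

lemma le_add_min_of_disjoint_prod {U : Set X} {V : Set Y} {S : Set (X × Y)} {c : ℝ≥0∞}
    (hU : MeasurableSet U) (hV : MeasurableSet V)
    (hc : ∀ A B, MeasurableSet A → MeasurableSet B → Disjoint (A ×ˢ B) (U ×ˢ V ∪ S) →
      c ≤ κ₁ Aᶜ + κ₂ Bᶜ)
    {A : Set X} {B : Set Y} (hA : MeasurableSet A) (hB : MeasurableSet B)
    (hAB : Disjoint (A ×ˢ B) S) :
    c ≤ κ₁ Aᶜ + κ₂ Bᶜ + min (κ₁ U) (κ₂ V) := by
  rw [← min_add_add_left]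
  refine le_min ?_ ?_
  · calc c ≤ κ₁ (A \ U)ᶜ + κ₂ Bᶜ := hc _ _ (hA.diff hU) hB <| disjoint_union_right.2
          ⟨disjoint_prod.2 (Or.inl disjoint_sdiff_left),
            hAB.mono_left (prod_mono sdiff_subset subset_rfl)⟩
      _ ≤ κ₁ Aᶜ + κ₂ Bᶜ + κ₁ U := by
        rw [compl_sdiff, union_comm, add_right_comm]
        exact add_le_add (measure_union_le _ _) le_rfl
  · calc c ≤ κ₁ Aᶜ + κ₂ (B \ V)ᶜ := hc _ _ hA (hB.diff hV) <| disjoint_union_right.2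
          ⟨disjoint_prod.2 (Or.inr disjoint_sdiff_left),
            hAB.mono_left (prod_mono subset_rfl sdiff_subset)⟩
      _ ≤ κ₁ Aᶜ + κ₂ Bᶜ + κ₂ V := by
        rw [compl_sdiff, union_comm, add_assoc]
        exact add_le_add le_rfl (measure_union_le _ _)

/-- Each step transports mass `θ = min (κ₁ U) (κ₂ V)` onto one rectangle `U ×ˢ V` by a
rescaled product measure, which lowers the bound `c` for the remaining rectangles by at
most `3 * θ`. -/
theorem exists_isSubcoupling_le_three_mul_measure_biUnion {ι : Type*}
    [IsFiniteMeasure κ₁] [IsFiniteMeasure κ₂] (s : Finset ι) {U : ι → Set X} {V : ι → Set Y}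
    (hU : ∀ i, MeasurableSet (U i)) (hV : ∀ i, MeasurableSet (V i)) {c : ℝ≥0∞}
    (hc : ∀ A B, MeasurableSet A → MeasurableSet B → Disjoint (A ×ˢ B) (⋃ i ∈ s, U i ×ˢ V i) →
      c ≤ κ₁ Aᶜ + κ₂ Bᶜ) :
    ∃ m : Measure (X × Y), m.IsSubcoupling κ₁ κ₂ ∧ c ≤ 3 * m (⋃ i ∈ s, U i ×ˢ V i) := by
  classical
  induction s using Finset.induction_on generalizing κ₁ κ₂ c with
  | empty => exact ⟨0, .zero, by simpa using hc univ univ .univ .univ (by simp)⟩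
  | insert a s _ ih =>
    simp only [Finset.set_biUnion_insert] at hc ⊢
    set S := ⋃ i ∈ s, U i ×ˢ V i
    obtain ⟨m₀, hm₀, hm₀univ⟩ :=
      Measure.exists_isSubcoupling_measure_univ_eq_min (κ₁.restrict (U a)) (κ₂.restrict (V a))
    rw [Measure.restrict_apply_univ, Measure.restrict_apply_univ] at hm₀univ
    set θ := min (κ₁ (U a)) (κ₂ (V a))
    have hm₀' : m₀.IsSubcoupling κ₁ κ₂ :=
      hm₀.mono Measure.restrict_le_self Measure.restrict_le_self
    have : IsFiniteMeasure m₀ := hm₀'.isFiniteMeasure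
    have : IsFiniteMeasure (κ₁ - m₀.map Prod.fst) := isFiniteMeasure_of_le κ₁ Measure.sub_le
    have : IsFiniteMeasure (κ₂ - m₀.map Prod.snd) := isFiniteMeasure_of_le κ₂ Measure.sub_le
    obtain ⟨m', hm', hc'⟩ := ih (κ₁ := κ₁ - m₀.map Prod.fst) (κ₂ := κ₂ - m₀.map Prod.snd)
      (c := c - 3 * θ) fun A B hA hB hAB => by
        have h₁ := Measure.apply_le_sub_apply_add_measure_univ hm₀'.1 Aᶜ
        have h₂ := Measure.apply_le_sub_apply_add_measure_univ hm₀'.2 Bᶜ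
        simp only [Measure.map_apply measurable_fst .univ, Measure.map_apply measurable_snd .univ,
          preimage_univ, hm₀univ] at h₁ h₂
        rw [tsub_le_iff_right]
        calc c ≤ κ₁ Aᶜ + κ₂ Bᶜ + θ := le_add_min_of_disjoint_prod (hU a) (hV a) hc hA hB hAB
          _ ≤ (κ₁ - m₀.map Prod.fst) Aᶜ + θ + ((κ₂ - m₀.map Prod.snd) Bᶜ + θ) + θ := by
            gcongr
          _ = _ := by ring
    refine ⟨m₀ + m', hm₀'.add_of_sub hm', ?_⟩
    have hθ : θ ≤ m₀ (U a ×ˢ V a ∪ S) := by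
      rw [← hm₀univ, ← hm₀.measure_prod_eq_measure_univ (hU a) (hV a)]
      exact measure_mono subset_union_left
    calc c ≤ c - 3 * θ + 3 * θ := le_tsub_add
      _ ≤ 3 * m' S + 3 * m₀ (U a ×ˢ V a ∪ S) := by gcongr
      _ ≤ 3 * m' (U a ×ˢ V a ∪ S) + 3 * m₀ (U a ×ˢ V a ∪ S) := by
        gcongr; exact subset_union_right
      _ = 3 * (m₀ + m') (U a ×ˢ V a ∪ S) := by rw [Measure.add_apply]; ring

lemma exists_isSubcoupling_two_mul_ge {κ₁ : Measure X} {κ₂ : Measure Y} [IsFiniteMeasure κ₁]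
    {W : Set (X × Y)} (hW : MeasurableSet W) :
    ∃ p : Measure (X × Y), p.IsSubcoupling κ₁ κ₂ ∧ p Wᶜ = 0 ∧
      ∀ m : Measure (X × Y), m.IsSubcoupling κ₁ κ₂ → m W ≤ 2 * p W := by
  set R := ⨆ (m : Measure (X × Y)) (_ : m.IsSubcoupling κ₁ κ₂), m W
  have hR : R ≠ ∞ := ne_top_of_le_ne_top (measure_ne_top κ₁ univ) <| iSup₂_le fun m hm =>
    (measure_mono (subset_univ W)).trans (by simpa using hm.measure_prod_univ_le .univ)
  obtain ⟨m, hm, hRm⟩ : ∃ m : Measure (X × Y), m.IsSubcoupling κ₁ κ₂ ∧ R / 2 ≤ m W := by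
    rcases eq_or_ne R 0 with h0 | h0
    · exact ⟨0, .zero, by simp [h0]⟩
    · obtain ⟨m, hRm⟩ := lt_iSup_iff.1 (ENNReal.half_lt_self h0 hR)
      obtain ⟨hm, hRm⟩ := lt_iSup_iff.1 hRm
      exact ⟨m, hm, hRm.le⟩
  refine ⟨m.restrict W, hm.restrict W, by simp [Measure.restrict_apply hW.compl], fun m' hm' => ?_⟩
  rw [Measure.restrict_apply hW, inter_self]
  calc m' W ≤ R := le_iSup₂_of_le m' hm' le_rfl
    _ = 2 * (R / 2) := (ENNReal.mul_div_cancel (by simp) (by simp)).symm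
    _ ≤ 2 * m W := by gcongr

/-- Exhaustion: greedily add near-optimal subcouplings of the remaining marginals, restricted
to `W`. If both marginals stayed unsaturated, `hpos` would give a fixed positive amount that
every greedy step must beat by half, making the total mass infinite. -/
theorem exists_isSubcoupling_saturated {σ₁ : Measure X} {σ₂ : Measure Y} [IsFiniteMeasure σ₁]
    [IsFiniteMeasure σ₂] {W : Set (X × Y)} (hW : MeasurableSet W)
    (hpos : ∀ (κ₁ : Measure X) (κ₂ : Measure Y), κ₁ ≤ σ₁ → κ₂ ≤ σ₂ → κ₁ ≠ 0 → κ₂ ≠ 0 →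
      ∃ m : Measure (X × Y), m.IsSubcoupling κ₁ κ₂ ∧ 0 < m W) :
    ∃ m : Measure (X × Y), m.IsSubcoupling σ₁ σ₂ ∧ m Wᶜ = 0 ∧
      (m.map Prod.fst = σ₁ ∨ m.map Prod.snd = σ₂) := by
  choose p hp hpW hpmax using fun ν : Measure (X × Y) =>
    exists_isSubcoupling_two_mul_ge (κ₁ := σ₁ - ν.map Prod.fst) (κ₂ := σ₂ - ν.map Prod.snd) hW
  let μ : ℕ → Measure (X × Y) := fun n => Nat.rec 0 (fun _ ν => ν + p ν) n
  have hμ_sum : ∀ n, μ n = ∑ k ∈ Finset.range n, p (μ k) := fun n => by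
    induction n with
    | zero => rfl
    | succ n ih => rw [Finset.sum_range_succ, ← ih]
  have hμ : ∀ n, (μ n).IsSubcoupling σ₁ σ₂ := fun n => by
    induction n with
    | zero => exact .zero
    | succ n ih => exact ih.add_of_sub (hp (μ n))
  set m := Measure.sum fun n => p (μ n)
  have hm : m.IsSubcoupling σ₁ σ₂ := .sum fun n => hμ_sum n ▸ hμ n
  have : IsFiniteMeasure m := hm.isFiniteMeasure
  refine ⟨m, hm, by simp [m, Measure.sum_apply _ hW.compl, hpW], ?_⟩
  by_contra! hne
  obtain ⟨q, hq, hqW⟩ := hpos _ _ Measure.sub_le Measure.sub_le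
    (Measure.sub_ne_zero_of_le_of_ne hm.1 hne.1) (Measure.sub_ne_zero_of_le_of_ne hm.2 hne.2)
  have hμm : ∀ n, μ n ≤ m := fun n => Measure.le_iff.2 fun s hs => by
    rw [hμ_sum, Measure.finsetSum_apply, Measure.sum_apply _ hs]
    exact ENNReal.sum_le_tsum _
  have hqμ : ∀ n, q W ≤ 2 * p (μ n) W := fun n => hpmax _ _ <| hq.mono
    (Measure.sub_le_sub_left (Measure.map_mono (hμm n) measurable_fst))
    (Measure.sub_le_sub_left (Measure.map_mono (hμm n) measurable_snd))
  have : ∞ ≤ 2 * m W :=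
    calc ∞ = ∑' _ : ℕ, q W := (ENNReal.tsum_const_eq_top_of_ne_zero hqW.ne').symm
      _ ≤ ∑' n, 2 * p (μ n) W := ENNReal.tsum_le_tsum hqμ
      _ = 2 * m W := by rw [ENNReal.tsum_mul_left, Measure.sum_apply _ hW]
  exact (ENNReal.mul_ne_top (by simp) (measure_ne_top m W)) (top_le_iff.1 this)

def IsRectNull (κ₁ : Measure X) (κ₂ : Measure Y) (T : Set (X × Y)) : Prop :=
  ∀ ε ≠ 0, ∃ A B, MeasurableSet A ∧ MeasurableSet B ∧ Disjoint (A ×ˢ B) T ∧ κ₁ Aᶜ + κ₂ Bᶜ < ε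

lemma IsRectNull.iUnion {ι : Type*} [Countable ι]
    {T : ι → Set (X × Y)} (hT : ∀ i, IsRectNull κ₁ κ₂ (T i)) :
    IsRectNull κ₁ κ₂ (⋃ i, T i) := by
  intro ε hε
  obtain ⟨ε', hε'0, hε'ε⟩ := ENNReal.exists_pos_sum_of_countable' hε ι
  choose A B hA hB hABT hAB using fun i => hT i (ε' i) (hε'0 i).ne'
  refine ⟨⋂ i, A i, ⋂ i, B i, .iInter hA, .iInter hB, disjoint_iUnion_right.2 fun i =>
    (hABT i).mono_left (prod_mono (iInter_subset A i) (iInter_subset B i)), ?_⟩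
  calc κ₁ (⋂ i, A i)ᶜ + κ₂ (⋂ i, B i)ᶜ ≤ ∑' i, κ₁ (A i)ᶜ + ∑' i, κ₂ (B i)ᶜ := by
        simp only [compl_iInter]
        exact add_le_add (measure_iUnion_le _) (measure_iUnion_le _)
    _ ≤ ∑' i, ε' i := by
        rw [← ENNReal.tsum_add]
        exact ENNReal.tsum_le_tsum fun i => (hAB i).le
    _ < ε := hε'ε

end

lemma measure_inter_pos_of_restrict_compl_lt {α : Type*} [MeasurableSpace α] {μ : Measure α}
    {A B : Set α} (hB : MeasurableSet B) (h : μ.restrict A Bᶜ < μ A) : 0 < μ (A ∩ B) := by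
  rw [Measure.restrict_apply hB.compl, inter_comm, ← sdiff_eq] at h
  refine pos_iff_ne_zero.2 fun h0 => h.not_ge ?_
  simpa [h0] using measure_le_inter_add_sdiff μ A B

/-- As a limit of measures, `μ₀` is finitely additive, so its values on compact sets form a
content; `μ` is the measure of that content. -/
theorem exists_measure_le_isOpen_ge_isCompact_of_tendsto {Z ι : Type*} [TopologicalSpace Z]
    [T2Space Z] [MeasurableSpace Z] [BorelSpace Z] {l : Filter ι} [l.NeBot] {m : ι → Measure Z}
    {μ₀ : Set Z → ℝ≥0∞} (hμ₀ : ∀ s, Tendsto (fun i => m i s) l (𝓝 (μ₀ s)))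
    (hfin : μ₀ univ ≠ ∞) :
    ∃ μ : Measure Z, (∀ G, IsOpen G → μ G ≤ μ₀ G) ∧ ∀ K, IsCompact K → μ₀ K ≤ μ K := by
  have mono : ∀ s t, s ⊆ t → μ₀ s ≤ μ₀ t := fun s t hst =>
    le_of_tendsto_of_tendsto' (hμ₀ s) (hμ₀ t) fun i => measure_mono hst
  have ne_top : ∀ s, μ₀ s ≠ ∞ := fun s => ne_top_of_le_ne_top hfin (mono _ _ (subset_univ s))
  have union_le : ∀ s t, μ₀ (s ∪ t) ≤ μ₀ s + μ₀ t := fun s t =>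
    le_of_tendsto_of_tendsto' (hμ₀ _) ((hμ₀ s).add (hμ₀ t)) fun i => measure_union_le s t
  have union_eq : ∀ s t, Disjoint s t → MeasurableSet t → μ₀ (s ∪ t) = μ₀ s + μ₀ t :=
    fun s t hst ht => tendsto_nhds_unique (hμ₀ _) <| by
      simpa only [measure_union hst ht] using (hμ₀ s).add (hμ₀ t)
  let C : Content Z :=
    { toFun := fun K => (μ₀ K).toNNReal
      mono' := fun K₁ K₂ h => ENNReal.toNNReal_mono (ne_top _) (mono _ _ h)
      sup_disjoint' := fun K₁ K₂ h _ hK₂ => by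
        simp only [TopologicalSpace.Compacts.coe_sup, union_eq _ _ h hK₂.measurableSet]
        exact ENNReal.toNNReal_add (ne_top _) (ne_top _)
      sup_le' := fun K₁ K₂ => by
        simp only [TopologicalSpace.Compacts.coe_sup]
        rw [← ENNReal.toNNReal_add (ne_top _) (ne_top _)]
        exact ENNReal.toNNReal_mono (ENNReal.add_ne_top.2 ⟨ne_top _, ne_top _⟩) (union_le _ _) }
  have hC : ∀ K : TopologicalSpace.Compacts Z, C K = μ₀ K := fun K =>
    ENNReal.coe_toNNReal (ne_top _)
  refine ⟨C.measure, fun G hG => ?_, fun K hK => ?_⟩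
  · rw [C.measure_apply hG.measurableSet, C.outerMeasure_of_isOpen G hG]
    exact iSup₂_le fun K hKG => (hC K).trans_le (mono _ _ hKG)
  · rw [C.measure_apply hK.measurableSet]
    exact (hC ⟨K, hK⟩).symm.trans_le (C.le_outerMeasure_compacts ⟨K, hK⟩)

section InnerRegular

variable {X Y : Type*} [MeasurableSpace X] [MeasurableSpace Y] [TopologicalSpace X]
  [TopologicalSpace Y] {κ₁ : Measure X} {κ₂ : Measure Y}

def IsUniformlyInnerRegular (κ₁ : Measure X) (κ₂ : Measure Y) (T : Set (X × Y)) : Prop :=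
  ∀ δ ≠ 0, ∃ K ⊆ T, IsCompact K ∧ ∀ m : Measure (X × Y), m.IsSubcoupling κ₁ κ₂ → m (T \ K) < δ

lemma IsUniformlyInnerRegular.empty : IsUniformlyInnerRegular κ₁ κ₂ ∅ := fun δ hδ =>
  ⟨∅, subset_rfl, isCompact_empty, fun m _ => by simpa using pos_iff_ne_zero.2 hδ⟩

lemma IsUniformlyInnerRegular.union {T T' : Set (X × Y)} (hT : IsUniformlyInnerRegular κ₁ κ₂ T)
    (hT' : IsUniformlyInnerRegular κ₁ κ₂ T') : IsUniformlyInnerRegular κ₁ κ₂ (T ∪ T') := by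
  intro δ hδ
  obtain ⟨K, hKT, hK, hmK⟩ := hT (δ / 2) (ENNReal.half_pos hδ).ne'
  obtain ⟨K', hKT', hK', hmK'⟩ := hT' (δ / 2) (ENNReal.half_pos hδ).ne'
  refine ⟨K ∪ K', union_subset_union hKT hKT', hK.union hK', fun m hm => ?_⟩
  calc m ((T ∪ T') \ (K ∪ K')) ≤ m (T \ K ∪ T' \ K') := measure_mono fun x hx => by
        rcases hx with ⟨hx | hx, hxK⟩
        exacts [Or.inl ⟨hx, fun h => hxK (Or.inl h)⟩, Or.inr ⟨hx, fun h => hxK (Or.inr h)⟩]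
    _ ≤ m (T \ K) + m (T' \ K') := measure_union_le _ _
    _ < δ / 2 + δ / 2 := ENNReal.add_lt_add (hmK m hm) (hmK' m hm)
    _ = δ := ENNReal.add_halves δ

lemma IsUniformlyInnerRegular.biUnion {ι : Type*} (s : Finset ι) {T : ι → Set (X × Y)}
    (hT : ∀ i ∈ s, IsUniformlyInnerRegular κ₁ κ₂ (T i)) :
    IsUniformlyInnerRegular κ₁ κ₂ (⋃ i ∈ s, T i) := by
  classical
  induction s using Finset.induction_on with
  | empty => simpa using IsUniformlyInnerRegular.empty
  | insert a s _ ih =>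
    rw [Finset.set_biUnion_insert]
    exact (hT a (s.mem_insert_self a)).union (ih fun i hi => hT i (Finset.mem_insert_of_mem hi))

end InnerRegular

section Polish

variable {X Y : Type*} [TopologicalSpace X] [PolishSpace X] [MeasurableSpace X] [BorelSpace X]
  [TopologicalSpace Y] [PolishSpace Y] [MeasurableSpace Y] [BorelSpace Y]
  {κ₁ : Measure X} {κ₂ : Measure Y} [IsFiniteMeasure κ₁] [IsFiniteMeasure κ₂]

lemma isUniformlyInnerRegular_prod {U : Set X} {V : Set Y} (hU : MeasurableSet U)
    (hV : MeasurableSet V) : IsUniformlyInnerRegular κ₁ κ₂ (U ×ˢ V) := by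
  intro δ hδ
  obtain ⟨K, hKU, hK, hκK⟩ :=
    hU.exists_isCompact_sdiff_lt (measure_ne_top κ₁ U) (ENNReal.half_pos hδ).ne'
  obtain ⟨L, hLV, hL, hκL⟩ :=
    hV.exists_isCompact_sdiff_lt (measure_ne_top κ₂ V) (ENNReal.half_pos hδ).ne'
  refine ⟨K ×ˢ L, prod_mono hKU hLV, hK.prod hL, fun m hm => ?_⟩
  calc m (U ×ˢ V \ K ×ˢ L) ≤ m ((U \ K) ×ˢ univ ∪ univ ×ˢ (V \ L)) := measure_mono
        fun p ⟨⟨hpU, hpV⟩, hpKL⟩ => by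
          by_cases hpK : p.1 ∈ K
          · exact Or.inr ⟨trivial, hpV, fun hpL => hpKL ⟨hpK, hpL⟩⟩
          · exact Or.inl ⟨⟨hpU, hpK⟩, trivial⟩
    _ ≤ κ₁ (U \ K) + κ₂ (V \ L) := (measure_union_le _ _).trans <| add_le_add
        (hm.measure_prod_univ_le (hU.diff hK.measurableSet))
        (hm.measure_univ_prod_le (hV.diff hL.measurableSet))
    _ < δ / 2 + δ / 2 := ENNReal.add_lt_add hκK hκL
    _ = δ := ENNReal.add_halves δ

theorem exists_isSubcoupling_of_ultrafilter {ι : Type*} (𝒰 : Ultrafilter ι)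
    {m : ι → Measure (X × Y)} (hm : ∀ i, (m i).IsSubcoupling κ₁ κ₂) :
    ∃ μ : Measure (X × Y), μ.IsSubcoupling κ₁ κ₂ ∧
      ∀ K, IsCompact K → ∀ a, (∀ᶠ i in 𝒰, a ≤ m i K) → a ≤ μ K := by
  choose μ₀ hμ₀ using fun s => isCompact_univ.ultrafilter_le_nhds (𝒰.map fun i => m i s)
    (by simp)
  replace hμ₀ : ∀ s, Tendsto (fun i => m i s) 𝒰 (𝓝 (μ₀ s)) := fun s => (hμ₀ s).2
  have hmarg₁ : ∀ A, MeasurableSet A → μ₀ (A ×ˢ univ) ≤ κ₁ A := fun A hA =>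
    le_of_tendsto' (hμ₀ _) fun i => (hm i).measure_prod_univ_le hA
  have hmarg₂ : ∀ B, MeasurableSet B → μ₀ (univ ×ˢ B) ≤ κ₂ B := fun B hB =>
    le_of_tendsto' (hμ₀ _) fun i => (hm i).measure_univ_prod_le hB
  have hfin : μ₀ univ ≠ ∞ :=
    ne_top_of_le_ne_top (measure_ne_top κ₁ univ) (by simpa using hmarg₁ univ .univ)
  obtain ⟨μ, hμG, hμK⟩ := exists_measure_le_isOpen_ge_isCompact_of_tendsto hμ₀ hfin
  refine ⟨μ, ⟨Measure.le_of_forall_isOpen_le fun U hU => ?_,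
    Measure.le_of_forall_isOpen_le fun U hU => ?_⟩,
    fun K hK a ha => (ge_of_tendsto (hμ₀ K) ha).trans (hμK K hK)⟩
  · rw [Measure.map_apply measurable_fst hU.measurableSet, ← prod_univ]
    exact (hμG _ (hU.prod isOpen_univ)).trans (hmarg₁ U hU.measurableSet)
  · rw [Measure.map_apply measurable_snd hU.measurableSet, ← univ_prod]
    exact (hμG _ (isOpen_univ.prod hU)).trans (hmarg₂ U hU.measurableSet)

/-- Otherwise there are subcouplings `m J` giving `⋂ j ≤ J, G j` mass `≥ η`; compact sets
`K J ⊆ ⋂ j ≤ J, G j`, chosen uniformly in `m`, keep most of it, and an ultrafilter limit of the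
`m J` charges `⋂ J, K J ⊆ ⋂ j, G j`. -/
theorem exists_forall_isSubcoupling_measure_biInter_lt {G : ℕ → Set (X × Y)}
    (hG : ∀ j, IsUniformlyInnerRegular κ₁ κ₂ (G j))
    (hnull : ∀ m : Measure (X × Y), m.IsSubcoupling κ₁ κ₂ → m (⋂ j, G j) = 0)
    {η : ℝ≥0∞} (hη : η ≠ 0) :
    ∃ J, ∀ m : Measure (X × Y), m.IsSubcoupling κ₁ κ₂ → m (⋂ j ≤ J, G j) < η := by
  by_contra! hbig
  choose m hm hmη using hbig
  obtain ⟨ε, hε0, hεη⟩ := ENNReal.exists_pos_sum_of_countable' hη ℕ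
  choose F hFG hFc hF using fun j => hG j (ε j) (hε0 j).ne'
  set K : ℕ → Set (X × Y) := fun J => ⋂ j ≤ J, F j
  have hKc : ∀ J, IsCompact (K J) := fun J => (hFc 0).of_isClosed_subset
    (isClosed_biInter fun j _ => (hFc j).isClosed) (iInter₂_subset 0 (Nat.zero_le J))
  have hK : Antitone K := fun i J hiJ => biInter_subset_biInter_left fun j hj => le_trans hj hiJ
  have hmK : ∀ J, η ≤ m J (K J) + ∑' j, ε j := fun J =>
    calc η ≤ m J (⋂ j ≤ J, G j) := hmη J
      _ ≤ m J (K J ∪ ⋃ j, G j \ F j) := measure_mono fun x hx => by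
        by_cases hxK : x ∈ K J
        · exact Or.inl hxK
        · simp only [K, mem_iInter, not_forall] at hx hxK
          obtain ⟨j, hj, hxj⟩ := hxK
          exact Or.inr (mem_iUnion.2 ⟨j, hx j hj, hxj⟩)
      _ ≤ m J (K J) + ∑' j, m J (G j \ F j) :=
        (measure_union_le _ _).trans (add_le_add le_rfl (measure_iUnion_le _))
      _ ≤ m J (K J) + ∑' j, ε j := by
        gcongr with j
        exact (hF j (m J) (hm J)).le
  obtain ⟨μ, hμ, hμK⟩ := exists_isSubcoupling_of_ultrafilter (Ultrafilter.of atTop) hm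
  have : IsFiniteMeasure μ := hμ.isFiniteMeasure
  have hμK' : ∀ i, η - ∑' j, ε j ≤ μ (K i) := fun i => hμK _ (hKc i) _ <|
    Eventually.filter_mono (Ultrafilter.of_le atTop) <| (eventually_ge_atTop i).mono
      fun J hiJ => tsub_le_iff_right.2 ((hmK J).trans (by gcongr; exact hK hiJ))
  have hpos : 0 < μ (⋂ i, K i) := by
    rw [hK.measure_iInter (fun i => (hKc i).measurableSet.nullMeasurableSet)
      ⟨0, measure_ne_top _ _⟩]
    exact (tsub_pos_of_lt hεη).trans_le (le_iInf hμK')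
  have hKG : ⋂ i, K i ⊆ ⋂ j, G j := subset_iInter fun j =>
    (iInter_subset K j).trans fun x hx => hFG j (mem_iInter₂.1 hx j le_rfl)
  exact hpos.ne' (measure_mono_null hKG (hnull μ hμ))

end Polish

end MeasureTheory

namespace IsFinUnionRect

lemma of_fintype {ι : Type*} [Fintype ι] {R : ι → Set (ℝ × ℝ)}
    (hR : ∀ k, ∃ U V : Set ℝ, MeasurableSet U ∧ MeasurableSet V ∧
      U ⊆ Ioo (0:ℝ) 1 ∧ V ⊆ Ioo (0:ℝ) 1 ∧ R k = U ×ˢ V) :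
    IsFinUnionRect (⋃ k, R k) :=
  ⟨_, R ∘ (Fintype.equivFin ι).symm, fun _ => hR _,
    ((Fintype.equivFin ι).symm.surjective.iUnion_comp R).symm⟩

lemma inter {S T : Set (ℝ × ℝ)} (hS : IsFinUnionRect S) (hT : IsFinUnionRect T) :
    IsFinUnionRect (S ∩ T) := by
  obtain ⟨n, R, hR, rfl⟩ := hS
  obtain ⟨n', R', hR', rfl⟩ := hT
  rw [iUnion_inter_iUnion, ← iUnion_prod' fun k : Fin n × Fin n' => R k.1 ∩ R' k.2]
  refine of_fintype fun k => ?_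
  obtain ⟨U, V, hU, hV, hU01, hV01, hk⟩ := hR k.1
  obtain ⟨U', V', hU', hV', -, -, hk'⟩ := hR' k.2
  exact ⟨U ∩ U', V ∩ V', hU.inter hU', hV.inter hV', inter_subset_left.trans hU01,
    inter_subset_left.trans hV01, by rw [hk, hk', prod_inter_prod]⟩

lemma biInter_le {G : ℕ → Set (ℝ × ℝ)} (hG : ∀ j, IsFinUnionRect (G j)) (J : ℕ) :
    IsFinUnionRect (⋂ j ≤ J, G j) := by
  induction J with
  | zero => simpa using hG 0
  | succ J ih => rw [biInter_le_succ]; exact ih.inter (hG _)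

lemma exists_eq_biUnion_prod {S : Set (ℝ × ℝ)} (hS : IsFinUnionRect S) :
    ∃ (n : ℕ) (U V : Fin n → Set ℝ), (∀ k, MeasurableSet (U k)) ∧ (∀ k, MeasurableSet (V k)) ∧
      S = ⋃ k ∈ Finset.univ, U k ×ˢ V k := by
  obtain ⟨n, R, hR, rfl⟩ := hS
  choose U V hU hV _ _ hR using hR
  exact ⟨n, U, V, hU, hV, by simp [hR]⟩

lemma measurableSet {S : Set (ℝ × ℝ)} (hS : IsFinUnionRect S) : MeasurableSet S := by
  obtain ⟨n, U, V, hU, hV, rfl⟩ := hS.exists_eq_biUnion_prod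
  exact .biUnion (to_countable _) fun k _ => (hU k).prod (hV k)

lemma isUniformlyInnerRegular {S : Set (ℝ × ℝ)} (hS : IsFinUnionRect S) (κ₁ κ₂ : Measure ℝ)
    [IsFiniteMeasure κ₁] [IsFiniteMeasure κ₂] : IsUniformlyInnerRegular κ₁ κ₂ S := by
  obtain ⟨n, U, V, hU, hV, rfl⟩ := hS.exists_eq_biUnion_prod
  exact .biUnion _ fun k _ => isUniformlyInnerRegular_prod (hU k) (hV k)

end IsFinUnionRect

lemma MemADeltaSigma.measurableSet {W : Set (ℝ × ℝ)} (hW : MemADeltaSigma W) :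
    MeasurableSet W := by
  obtain ⟨G, hG, rfl⟩ := hW
  exact .iUnion fun i => .iInter fun j => (hG i j).measurableSet

/-- Some finite stage `⋂ j ≤ J, G j` has mass `< ε / 3` under every subcoupling, and finite
duality turns this into a rectangle missing it. -/
lemma isRectNull_iInter_of_isFinUnionRect {κ₁ κ₂ : Measure ℝ} [IsFiniteMeasure κ₁]
    [IsFiniteMeasure κ₂] {G : ℕ → Set (ℝ × ℝ)} (hG : ∀ j, IsFinUnionRect (G j))
    (hnull : ∀ m : Measure (ℝ × ℝ), m.IsSubcoupling κ₁ κ₂ → m (⋂ j, G j) = 0) :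
    IsRectNull κ₁ κ₂ (⋂ j, G j) := by
  intro ε hε
  obtain ⟨J, hJ⟩ := exists_forall_isSubcoupling_measure_biInter_lt (η := ε / 3)
    (fun j => (hG j).isUniformlyInnerRegular κ₁ κ₂) hnull (ENNReal.div_pos hε (by simp)).ne'
  obtain ⟨n, U, V, hU, hV, hUV⟩ := (IsFinUnionRect.biInter_le hG J).exists_eq_biUnion_prod
  have hGS : ⋂ j, G j ⊆ ⋂ j ≤ J, G j := fun x hx => mem_iInter₂.2 fun j _ => mem_iInter.1 hx j
  by_contra! hbig
  obtain ⟨m, hm, hεm⟩ := exists_isSubcoupling_le_three_mul_measure_biUnion Finset.univ hU hV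
    fun A B hA hB hAB => hbig A B hA hB (hAB.mono_right (hUV ▸ hGS))
  have hmS := (ENNReal.lt_div_iff_mul_lt (by simp) (by simp)).1 (hUV ▸ hJ m hm)
  exact (hεm.trans_lt (mul_comm (3 : ℝ≥0∞) _ ▸ hmS)).false

/-- If all subcouplings ignored `W`, then `W` would be rect-null and miss a rectangle of positive
measure inside `A × B`. -/
theorem exists_isSubcoupling_restrict_pos_of_meets {W : Set (ℝ × ℝ)} (hW : MemADeltaSigma W)
    (hmeet : ∀ A B : Set ℝ, MeasurableSet A → MeasurableSet B →
      A ⊆ Ioo (0:ℝ) 1 → B ⊆ Ioo (0:ℝ) 1 →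
      0 < volume A → 0 < volume B → (W ∩ A ×ˢ B).Nonempty)
    {A B : Set ℝ} (hA : MeasurableSet A) (hB : MeasurableSet B) (hA01 : A ⊆ Ioo 0 1)
    (hB01 : B ⊆ Ioo 0 1) (hA0 : 0 < volume A) (hB0 : 0 < volume B) :
    ∃ m : Measure (ℝ × ℝ), m.IsSubcoupling (volume.restrict A) (volume.restrict B) ∧ 0 < m W := by
  have : IsFiniteMeasure (volume.restrict A) :=
    isFiniteMeasure_restrict.2 (measure_ne_top_of_subset hA01 (by simp))
  have : IsFiniteMeasure (volume.restrict B) :=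
    isFiniteMeasure_restrict.2 (measure_ne_top_of_subset hB01 (by simp))
  by_contra! hnull
  obtain ⟨G, hG, rfl⟩ := hW
  have hrect : IsRectNull (volume.restrict A) (volume.restrict B) (⋃ i, ⋂ j, G i j) :=
    .iUnion fun i => isRectNull_iInter_of_isFinUnionRect (hG i) fun m hm =>
      measure_mono_null (subset_iUnion (fun i => ⋂ j, G i j) i) (nonpos_iff_eq_zero.1 (hnull m hm))
  obtain ⟨A', B', hA', hB', hdisj, hsmall⟩ :=
    hrect (min (volume A) (volume B)) (lt_min hA0 hB0).ne'
  obtain ⟨p, hpW, hpA, hpB⟩ := hmeet (A ∩ A') (B ∩ B') (hA.inter hA') (hB.inter hB')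
    (inter_subset_left.trans hA01) (inter_subset_left.trans hB01)
    (measure_inter_pos_of_restrict_compl_lt hA'
      ((le_self_add.trans_lt hsmall).trans_le (min_le_left _ _)))
    (measure_inter_pos_of_restrict_compl_lt hB'
      ((le_add_self.trans_lt hsmall).trans_le (min_le_right _ _)))
  exact disjoint_left.1 hdisj ⟨hpA.2, hpB.2⟩ hpW

/-- Each `κᵢ` dominates a multiple of Lebesgue measure on a set of positive measure. -/
theorem exists_isSubcoupling_pos_of_meets {W : Set (ℝ × ℝ)} (hW : MemADeltaSigma W)
    (hmeet : ∀ A B : Set ℝ, MeasurableSet A → MeasurableSet B →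
      A ⊆ Ioo (0:ℝ) 1 → B ⊆ Ioo (0:ℝ) 1 →
      0 < volume A → 0 < volume B → (W ∩ A ×ˢ B).Nonempty)
    {κ₁ κ₂ : Measure ℝ} (h₁ : κ₁ ≤ volume.restrict (Ioo 0 1)) (h₂ : κ₂ ≤ volume.restrict (Ioo 0 1))
    (hκ₁ : κ₁ ≠ 0) (hκ₂ : κ₂ ≠ 0) :
    ∃ m : Measure (ℝ × ℝ), m.IsSubcoupling κ₁ κ₂ ∧ 0 < m W := by
  obtain ⟨E₁, hE₁, hE₁0, δ₁, hδ₁, hδκ₁⟩ := Measure.exists_smul_restrict_le_of_le h₁ hκ₁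
  obtain ⟨E₂, hE₂, hE₂0, δ₂, hδ₂, hδκ₂⟩ := Measure.exists_smul_restrict_le_of_le h₂ hκ₂
  rw [Measure.restrict_restrict hE₁] at hδκ₁
  rw [Measure.restrict_restrict hE₂] at hδκ₂
  rw [Measure.restrict_apply hE₁] at hE₁0
  rw [Measure.restrict_apply hE₂] at hE₂0
  obtain ⟨m, hm, hmW⟩ := exists_isSubcoupling_restrict_pos_of_meets hW hmeet
    (hE₁.inter measurableSet_Ioo) (hE₂.inter measurableSet_Ioo) inter_subset_right
    inter_subset_right hE₁0 hE₂0
  have hδ : min δ₁ δ₂ ≠ 0 := (lt_min (pos_iff_ne_zero.2 hδ₁) (pos_iff_ne_zero.2 hδ₂)).ne'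
  refine ⟨min δ₁ δ₂ • m, (hm.smul (min δ₁ δ₂)).mono
    ((IsOrderedSMul.smul_le_smul_right _ _ (min_le_left _ _) _).trans hδκ₁)
    ((IsOrderedSMul.smul_le_smul_right _ _ (min_le_right _ _) _).trans hδκ₂), ?_⟩
  simpa using ENNReal.mul_pos hδ hmW.ne'

theorem stmt4 (W : Set (ℝ × ℝ)) (hW : MemADeltaSigma W)
    (hmeet : ∀ A B : Set ℝ, MeasurableSet A → MeasurableSet B →
      A ⊆ Ioo (0:ℝ) 1 → B ⊆ Ioo (0:ℝ) 1 →
      0 < volume A → 0 < volume B → (W ∩ A ×ˢ B).Nonempty) :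
    ∃ m : Measure (ℝ × ℝ), IsProbabilityMeasure m ∧ m W = 1 ∧
      m.map Prod.fst = volume.restrict (Ioo (0:ℝ) 1) ∧
      m.map Prod.snd = volume.restrict (Ioo (0:ℝ) 1) := by
  obtain ⟨m, hm, hmW, hsat⟩ := exists_isSubcoupling_saturated hW.measurableSet
    fun κ₁ κ₂ h₁ h₂ hκ₁ hκ₂ => exists_isSubcoupling_pos_of_meets hW hmeet h₁ h₂ hκ₁ hκ₂
  obtain ⟨h₁, h₂⟩ := hm.map_eq_of_saturated rfl hsat
  have hmass : m univ = 1 := by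
    simpa [Measure.map_apply measurable_fst .univ] using congrArg (· univ) h₁
  refine ⟨m, ⟨hmass⟩, ?_, h₁, h₂⟩
  rw [← hmass, ← measure_add_measure_compl hW.measurableSet, hmW, add_zero]
end
end

section
/- Let (Ω,F,P) be a probability space, C ⊆ Ω a measurable set, and F_1, F_2 ⊆ F sub-σ-fields. The following are equivalent: (a) there exists a measurable f : Ω×Ω → [0,∞) with P(A ∩ B ∩ C) = ∫_{A×B} f d(P⊗P) for all A ∈ F_1, B ∈ F_2; (b) there exists a measurable g : C×C → [0,∞) with P(A ∩ B ∩ C) = ∫_{(A∩C)×(B∩C)} g d(P⊗P) for all A ∈ F_1, B ∈ F_2. -/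
/-!
Both conditions say that the measure `A × B ↦ P (A ∩ B ∩ C)` on `F₁ ⊗ F₂`, the law of
`ω ↦ (ω, ω)` under `P|C`, has a density: with respect to `P ⊗ P` in (a) and to `P|C ⊗ P|C`
in (b), both trimmed to `F₁ ⊗ F₂`. By Radon–Nikodym and uniqueness of finite measures agreeing
on rectangles, this is absolute continuity, so (b) ⇒ (a) because `P|C ⊗ P|C ≤ P ⊗ P`.
For (a) ⇒ (b), take `Sᵢ ∈ Fᵢ` of full `P|C`-measure on which `P ≪ P|C` as measures on `Fᵢ`
(the complement of the support of the singular part). The diagonal measure has marginals `P|C`,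
so it puts no mass outside `S₁ × S₂`, while on `S₁ × S₂` we have `P ⊗ P ≪ P|C ⊗ P|C`.
-/

open MeasureTheory Set
open scoped ENNReal

noncomputable section

lemma MeasurableSpace.prod_mono {α β : Type*} {m₁ m₁' : MeasurableSpace α}
    {m₂ m₂' : MeasurableSpace β} (h₁ : m₁ ≤ m₁') (h₂ : m₂ ≤ m₂') :
    m₁.prod m₂ ≤ m₁'.prod m₂' :=
  sup_le_sup (MeasurableSpace.comap_mono h₁) (MeasurableSpace.comap_mono h₂)

namespace MeasureTheory.Measure

variable {α β : Type*}

lemma exists_measurableSet_restrict_absolutelyContinuous {m : MeasurableSpace α}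
    (ρ μ : Measure α) [ρ.HaveLebesgueDecomposition μ] :
    ∃ S, MeasurableSet S ∧ μ Sᶜ = 0 ∧ ρ.restrict S ≪ μ := by
  obtain ⟨S, hS, h_sing, hμS⟩ := mutuallySingular_singularPart ρ μ
  refine ⟨S, hS, hμS, ?_⟩
  rw [haveLebesgueDecomposition_add ρ μ, restrict_add, restrict_eq_zero.mpr h_sing, zero_add]
  exact restrict_le_self.absolutelyContinuous.trans (withDensity_absolutelyContinuous _ _)

theorem absolutelyContinuous_prod_of_map_fst_of_map_snd {mα : MeasurableSpace α}
    {mβ : MeasurableSpace β} {μ₁ ρ₁ : Measure α} {μ₂ ρ₂ : Measure β} [SigmaFinite μ₁]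
    [SigmaFinite ρ₁] [SigmaFinite μ₂] [SigmaFinite ρ₂] {κ : Measure (α × β)}
    (hκ : κ ≪ ρ₁.prod ρ₂) (h₁ : κ.map Prod.fst ≪ μ₁) (h₂ : κ.map Prod.snd ≪ μ₂) :
    κ ≪ μ₁.prod μ₂ := by
  obtain ⟨S₁, hS₁, hμS₁, hρS₁⟩ := exists_measurableSet_restrict_absolutelyContinuous ρ₁ μ₁
  obtain ⟨S₂, hS₂, hμS₂, hρS₂⟩ := exists_measurableSet_restrict_absolutelyContinuous ρ₂ μ₂
  refine AbsolutelyContinuous.mk fun s hs hs0 => ?_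
  have h_inside : κ (s ∩ S₁ ×ˢ S₂) = 0 := by
    refine hκ ?_
    rw [← restrict_apply hs, ← prod_restrict]
    exact hρS₁.prod hρS₂ hs0
  have h_fst : κ (Prod.fst ⁻¹' S₁ᶜ) = 0 := by
    rw [← map_apply measurable_fst hS₁.compl]
    exact h₁ hμS₁
  have h_snd : κ (Prod.snd ⁻¹' S₂ᶜ) = 0 := by
    rw [← map_apply measurable_snd hS₂.compl]
    exact h₂ hμS₂
  refine measure_mono_null (fun p hp => ?_)
    (measure_union_null (measure_union_null h_inside h_fst) h_snd)
  by_cases p.1 ∈ S₁ <;> by_cases p.2 ∈ S₂ <;> simp_all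

theorem trim_prod {mα mα₀ : MeasurableSpace α} {mβ mβ₀ : MeasurableSpace β}
    (hα : mα ≤ mα₀) (hβ : mβ ≤ mβ₀) (μ : @Measure α mα₀) (ν : @Measure β mβ₀)
    [SigmaFinite (μ.trim hα)] [SigmaFinite (ν.trim hβ)] :
    (@Measure.prod α β mα₀ mβ₀ μ ν).trim (MeasurableSpace.prod_mono hα hβ) =
      @Measure.prod α β mα mβ (μ.trim hα) (ν.trim hβ) := by
  have := SigmaFinite.of_trim hα (μ := μ)
  have := SigmaFinite.of_trim hβ (μ := ν)
  refine (@prod_eq α β mα mβ _ _ _ _ _ fun s t hs ht => ?_).symm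
  rw [trim_measurableSet_eq _ (@MeasurableSet.prod α β mα mβ s t hs ht),
    @prod_prod α β mα₀ mβ₀ μ ν _ s t, trim_measurableSet_eq hα hs, trim_measurableSet_eq hβ ht]

theorem exists_setLIntegral_prod_eq_iff_absolutelyContinuous_trim
    {mα mα₀ : MeasurableSpace α} {mβ mβ₀ : MeasurableSpace β} (hα : mα ≤ mα₀) (hβ : mβ ≤ mβ₀)
    (κ : @Measure (α × β) (mα.prod mβ)) [IsFiniteMeasure κ]
    (ρ : @Measure (α × β) (mα₀.prod mβ₀)) [SigmaFinite (ρ.trim (MeasurableSpace.prod_mono hα hβ))] :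
    (∃ f : α × β → ℝ≥0∞, Measurable[mα₀.prod mβ₀] f ∧
      ∀ A B, MeasurableSet[mα] A → MeasurableSet[mβ] B → κ (A ×ˢ B) = ∫⁻ p in A ×ˢ B, f p ∂ρ) ↔
    κ ≪ ρ.trim (MeasurableSpace.prod_mono hα hβ) := by
  have hm := MeasurableSpace.prod_mono hα hβ
  constructor
  · rintro ⟨f, -, hf⟩
    have hκ : κ = (ρ.withDensity f).trim hm := ext_prod fun {A B} hA hB => by
      rw [trim_measurableSet_eq hm (hA.prod hB), withDensity_apply _ ((hα A hA).prod (hβ B hB))]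
      exact hf A B hA hB
    rw [hκ]
    exact (withDensity_absolutelyContinuous ρ f).trim hm
  · intro hκ
    have hf := measurable_rnDeriv κ (ρ.trim hm)
    refine ⟨κ.rnDeriv (ρ.trim hm), hf.mono hm le_rfl, fun A B hA hB => ?_⟩
    rw [← withDensity_apply _ ((hα A hA).prod (hβ B hB)), ← trim_measurableSet_eq hm (hA.prod hB),
      trim_withDensity hm hf, withDensity_rnDeriv_eq _ _ hκ]

end MeasureTheory.Measure

lemma MeasureTheory.setLIntegral_prod_restrict_restrict {α β : Type*} {mα : MeasurableSpace α}
    {mβ : MeasurableSpace β} (μ : Measure α) (ν : Measure β) [SFinite μ] [SFinite ν]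
    (f : α × β → ℝ≥0∞) {A C : Set α} {B D : Set β} (hA : MeasurableSet A) (hB : MeasurableSet B) :
    ∫⁻ p in A ×ˢ B, f p ∂((μ.restrict C).prod (ν.restrict D)) =
      ∫⁻ p in (A ∩ C) ×ˢ (B ∩ D), f p ∂(μ.prod ν) := by
  rw [Measure.prod_restrict, Measure.restrict_restrict (hA.prod hB), prod_inter_prod]

def diagonalMeasure {Ω : Type*} {mΩ : MeasurableSpace Ω} (μ : Measure Ω)
    (F₁ F₂ : MeasurableSpace Ω) : @Measure (Ω × Ω) (F₁.prod F₂) :=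
  @Measure.map Ω (Ω × Ω) mΩ (F₁.prod F₂) (fun ω => (ω, ω)) μ

instance isFiniteMeasure_diagonalMeasure {Ω : Type*} {mΩ : MeasurableSpace Ω} (μ : Measure Ω)
    [IsFiniteMeasure μ] (F₁ F₂ : MeasurableSpace Ω) : IsFiniteMeasure (diagonalMeasure μ F₁ F₂) :=
  @Measure.isFiniteMeasure_map Ω (Ω × Ω) (F₁.prod F₂) mΩ μ _ _

section Diagonal

variable {Ω : Type*} {F₁ F₂ mΩ : MeasurableSpace Ω}
  (h₁ : F₁ ≤ mΩ) (h₂ : F₂ ≤ mΩ)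
include h₁ h₂

lemma diagonalMeasure_prod (μ : Measure Ω) {A B : Set Ω} (hA : MeasurableSet[F₁] A)
    (hB : MeasurableSet[F₂] B) : diagonalMeasure μ F₁ F₂ (A ×ˢ B) = μ (A ∩ B) :=
  Measure.map_apply (μ := μ) (f := fun ω => (ω, ω))
    ((measurable_id'' h₁).prodMk (measurable_id'' h₂)) (hA.prod hB)

lemma map_fst_diagonalMeasure (μ : Measure Ω) :
    @Measure.map _ _ (F₁.prod F₂) F₁ Prod.fst (diagonalMeasure μ F₁ F₂) = μ.trim h₁ := by
  refine @Measure.ext _ F₁ _ _ fun s hs => ?_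
  rw [Measure.map_apply measurable_fst hs, ← prod_univ, diagonalMeasure_prod h₁ h₂ μ hs .univ,
    inter_univ, trim_measurableSet_eq h₁ hs]

lemma map_snd_diagonalMeasure (μ : Measure Ω) :
    @Measure.map _ _ (F₁.prod F₂) F₂ Prod.snd (diagonalMeasure μ F₁ F₂) = μ.trim h₂ := by
  refine @Measure.ext _ F₂ _ _ fun s hs => ?_
  rw [Measure.map_apply measurable_snd hs, ← univ_prod, diagonalMeasure_prod h₁ h₂ μ .univ hs,
    univ_inter, trim_measurableSet_eq h₂ hs]

lemma diagonalMeasure_absolutelyContinuous_trim_prod_iff {P μ : Measure Ω} [IsFiniteMeasure P]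
    [IsFiniteMeasure μ] (hμ : μ ≪ P) :
    diagonalMeasure μ F₁ F₂ ≪ (P.prod P).trim (MeasurableSpace.prod_mono h₁ h₂) ↔
      diagonalMeasure μ F₁ F₂ ≪ (μ.prod μ).trim (MeasurableSpace.prod_mono h₁ h₂) := by
  refine ⟨fun h => ?_, fun h => h.trans ((hμ.prod hμ).trim _)⟩
  rw [Measure.trim_prod h₁ h₂] at h ⊢
  refine Measure.absolutelyContinuous_prod_of_map_fst_of_map_snd h ?_ ?_
  · rw [map_fst_diagonalMeasure h₁ h₂]
  · rw [map_snd_diagonalMeasure h₁ h₂]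

lemma exists_density_iff_diagonalMeasure_absolutelyContinuous (P : Measure Ω) [IsFiniteMeasure P]
    (C : Set Ω) (ρ : Measure (Ω × Ω)) [IsFiniteMeasure ρ] :
    (∃ f : Ω × Ω → ℝ≥0∞, Measurable f ∧ ∀ A B : Set Ω, MeasurableSet[F₁] A →
      MeasurableSet[F₂] B → P (A ∩ B ∩ C) = ∫⁻ p in A ×ˢ B, f p ∂ρ) ↔
    diagonalMeasure (P.restrict C) F₁ F₂ ≪ ρ.trim (MeasurableSpace.prod_mono h₁ h₂) := by
  rw [← Measure.exists_setLIntegral_prod_eq_iff_absolutelyContinuous_trim h₁ h₂]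
  refine exists_congr fun f => and_congr_right fun _ =>
    forall₂_congr fun A B => forall₂_congr fun hA hB => ?_
  rw [diagonalMeasure_prod h₁ h₂ _ hA hB, Measure.restrict_apply ((h₁ A hA).inter (h₂ B hB))]

end Diagonal

theorem stmt6_general {Ω : Type*} [inst : MeasurableSpace Ω] (P : Measure Ω)
    [IsProbabilityMeasure P] (C : Set Ω)
    (F1 F2 : MeasurableSpace Ω) (h1 : F1 ≤ inst) (h2 : F2 ≤ inst) :
    (∃ f : Ω × Ω → ℝ≥0∞,
      @Measurable _ _ (@Prod.instMeasurableSpace Ω Ω inst inst) _ f ∧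
      ∀ A B : Set Ω, MeasurableSet[F1] A → MeasurableSet[F2] B →
        P (A ∩ B ∩ C) =
          ∫⁻ p in A ×ˢ B, f p ∂(@Measure.prod Ω Ω inst inst P P)) ↔
    (∃ g : Ω × Ω → ℝ≥0∞,
      @Measurable _ _ (@Prod.instMeasurableSpace Ω Ω inst inst) _ g ∧
      ∀ A B : Set Ω, MeasurableSet[F1] A → MeasurableSet[F2] B →
        P (A ∩ B ∩ C) =
          ∫⁻ p in (A ∩ C) ×ˢ (B ∩ C), g p ∂(@Measure.prod Ω Ω inst inst P P)) := by
  have hPC : P.restrict C ≪ P := Measure.restrict_le_self.absolutelyContinuous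
  rw [exists_density_iff_diagonalMeasure_absolutelyContinuous h1 h2,
    diagonalMeasure_absolutelyContinuous_trim_prod_iff h1 h2 hPC,
    ← exists_density_iff_diagonalMeasure_absolutelyContinuous h1 h2]
  refine exists_congr fun g => and_congr_right fun _ =>
    forall₂_congr fun A B => forall₂_congr fun hA hB => ?_
  rw [setLIntegral_prod_restrict_restrict P P g (h1 A hA) (h2 B hB)]

theorem stmt6 {Ω : Type*} [inst : MeasurableSpace Ω] (P : Measure Ω)
    [IsProbabilityMeasure P] (C : Set Ω) (hC : MeasurableSet C)
    (F1 F2 : MeasurableSpace Ω) (h1 : F1 ≤ inst) (h2 : F2 ≤ inst) :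
    (∃ f : Ω × Ω → ℝ≥0∞,
      @Measurable _ _ (@Prod.instMeasurableSpace Ω Ω inst inst) _ f ∧
      ∀ A B : Set Ω, MeasurableSet[F1] A → MeasurableSet[F2] B →
        P (A ∩ B ∩ C) =
          ∫⁻ p in A ×ˢ B, f p ∂(@Measure.prod Ω Ω inst inst P P)) ↔
    (∃ g : Ω × Ω → ℝ≥0∞,
      @Measurable _ _ (@Prod.instMeasurableSpace Ω Ω inst inst) _ g ∧
      ∀ A B : Set Ω, MeasurableSet[F1] A → MeasurableSet[F2] B →
        P (A ∩ B ∩ C) =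
          ∫⁻ p in (A ∩ C) ×ˢ (B ∩ C), g p ∂(@Measure.prod Ω Ω inst inst P P)) :=
  stmt6_general (inst := inst) P C F1 F2 h1 h2
end
end

section
/- Let (Ω,F,P) be a probability space, F_1, F_2 ⊆ F sub-σ-fields, and C_1, C_2, … pairwise disjoint measurable sets with union C. If F_1, F_2 are a nonsingular pair within each C_k, then they are a nonsingular pair within C. -/
open MeasureTheory Set
open scoped ENNReal

noncomputable section

/-- `F1, F2` are a nonsingular pair within `C`: there is a measurable
`f : Ω × Ω → [0,∞)` with `P(A ∩ B ∩ C) = ∫_{A×B} f d(P⊗P)` for all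
`A ∈ F1`, `B ∈ F2`. -/
def NonsingularPair {Ω : Type*} [inst : MeasurableSpace Ω] (P : Measure Ω)
    (F1 F2 : MeasurableSpace Ω) (C : Set Ω) : Prop :=
  ∃ f : Ω × Ω → ℝ≥0∞,
    @Measurable _ _ (@Prod.instMeasurableSpace Ω Ω inst inst) _ f ∧
    ∀ A B : Set Ω, MeasurableSet[F1] A → MeasurableSet[F2] B →
      P (A ∩ B ∩ C) = ∫⁻ p in A ×ˢ B, f p ∂(@Measure.prod Ω Ω inst inst P P)

theorem MeasureTheory.measure_inter_iUnion {α ι : Type*} [MeasurableSpace α] [Countable ι]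
    (μ : Measure α) {C : ι → Set α} (hC : ∀ i, MeasurableSet (C i))
    (hd : Pairwise (Function.onFun Disjoint C)) (S : Set α) :
    μ (S ∩ ⋃ i, C i) = ∑' i, μ (S ∩ C i) := by
  rw [← Measure.restrict_apply' (MeasurableSet.iUnion hC), Measure.restrict_iUnion hd hC,
    Measure.sum_apply_of_countable]
  exact tsum_congr fun i => Measure.restrict_apply' (hC i)

/-- The density on the union is the sum of the densities on the pieces.
`F1, F2` are bound before the ambient instance `mΩ` so that instance resolution picks `mΩ`. -/
theorem NonsingularPair.iUnion {Ω ι : Type*} {F1 F2 : MeasurableSpace Ω} [mΩ : MeasurableSpace Ω]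
    [Countable ι] {P : Measure Ω} {C : ι → Set Ω}
    (hC : ∀ i, MeasurableSet (C i)) (hd : Pairwise (Function.onFun Disjoint C))
    (h : ∀ i, NonsingularPair P F1 F2 (C i)) :
    NonsingularPair P F1 F2 (⋃ i, C i) := by
  choose f hfm hf using h
  refine ⟨fun p => ∑' i, f i p, Measurable.tsum hfm, fun A B hA hB => ?_⟩
  rw [measure_inter_iUnion P hC hd, lintegral_tsum fun i => (hfm i).aemeasurable]
  exact tsum_congr fun i => hf i A B hA hB

theorem stmt8_general {Ω : Type*} [inst : MeasurableSpace Ω] (P : Measure Ω)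
    (C : ℕ → Set Ω)
    (hCm : ∀ k, MeasurableSet (C k)) (hdisj : Pairwise (Function.onFun Disjoint C))
    (F1 F2 : MeasurableSpace Ω)
    (h : ∀ k, @NonsingularPair Ω inst P F1 F2 (C k)) :
    @NonsingularPair Ω inst P F1 F2 (⋃ k, C k) :=
  NonsingularPair.iUnion (mΩ := inst) hCm hdisj h

theorem stmt8 {Ω : Type*} [inst : MeasurableSpace Ω] (P : Measure Ω)
    [IsProbabilityMeasure P] (C : ℕ → Set Ω)
    (hCm : ∀ k, MeasurableSet (C k)) (hdisj : Pairwise (Function.onFun Disjoint C))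
    (F1 F2 : MeasurableSpace Ω) (h1 : F1 ≤ inst) (h2 : F2 ≤ inst)
    (h : ∀ k, @NonsingularPair Ω inst P F1 F2 (C k)) :
    @NonsingularPair Ω inst P F1 F2 (⋃ k, C k) :=
  stmt8_general (inst := inst) P C hCm hdisj F1 F2 h
end
end

section
/- Let Y_1, Y_2, … : Ω → (0,1) be measurable functions on a probability space Ω equipped with a topology making it a compact metrizable space with a Borel probability measure P. Then there exists a set Ω_1 ⊆ Ω with P(Ω_1) = 1 such that the set W_1 = {(ω,t) : ω ∈ Ω_1, t ∈ {Y_1(ω), Y_2(ω), …}} is a countable union of compact subsets of Ω × (0,1). -/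
open MeasureTheory Set
open scoped ENNReal

noncomputable section

/-!
Push the law of `ω ↦ (ω, Y k ω)` forward to the Polish space `Ω × ℝ`: its inner regularity yields
a compact piece of the graph of `Y k` lying over a set of nearly full measure. Intersecting these
sets over `k`, with summable error bounds, gives compact sets `C m` with `P (C m)ᶜ ≤ 1 / m` over
which every graph is compact; take `Ω₁ = ⋃ m, C m`.
-/

section GraphOn

variable {X Y : Type*} [TopologicalSpace X] [TopologicalSpace Y] {f : X → Y} {s t : Set X}

theorem IsCompact.of_graphOn (h : IsCompact (s.graphOn f)) : IsCompact s :=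
  image_fst_graphOn f s ▸ h.image continuous_fst

theorem IsCompact.graphOn_of_subset (h : IsCompact (s.graphOn f)) (ht : IsClosed t)
    (hts : t ⊆ s) : IsCompact (t.graphOn f) := by
  have : t.graphOn f = s.graphOn f ∩ t ×ˢ univ := by
    ext p
    simp only [mem_graphOn, mem_inter_iff, mem_prod, mem_univ, and_true]
    exact ⟨fun h ↦ ⟨⟨hts h.1, h.2⟩, h.1⟩, fun h ↦ ⟨h.2, h.1.2⟩⟩
  rw [this]
  exact h.inter_right (ht.prod isClosed_univ)

end GraphOn

section Measurable

variable {X Y : Type*} [TopologicalSpace X] [PolishSpace X] [MeasurableSpace X] [BorelSpace X]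
  [TopologicalSpace Y] [PolishSpace Y] [MeasurableSpace Y] [BorelSpace Y]
  (μ : Measure X) [IsFiniteMeasure μ] {ε : ℝ≥0∞}

theorem Measurable.exists_isCompact_graphOn_measure_compl_lt {f : X → Y} (hf : Measurable f)
    (hε : ε ≠ 0) : ∃ K : Set X, IsCompact (K.graphOn f) ∧ μ Kᶜ < ε := by
  set g : X → X × Y := fun x ↦ (x, f x)
  have hg : MeasurableEmbedding g :=
    (measurable_id.prodMk hf).measurableEmbedding fun _ _ h ↦ congrArg Prod.fst h
  obtain ⟨L, hLg, hL, hμL⟩ :=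
    hg.measurableSet_range.exists_isCompact_sdiff_lt (μ := μ.map g) (measure_ne_top _ _) hε
  refine ⟨g ⁻¹' L, ?_, ?_⟩
  · rwa [graphOn, image_preimage_eq_of_subset hLg]
  · rwa [hg.map_apply, preimage_sdiff, preimage_range, ← compl_eq_univ_sdiff] at hμL

theorem exists_forall_isCompact_graphOn_measure_compl_lt {ι : Type*} [Countable ι]
    {f : ι → X → Y} (hf : ∀ i, Measurable (f i)) (hε : ε ≠ 0) :
    ∃ K : Set X, (∀ i, IsCompact (K.graphOn (f i))) ∧ μ Kᶜ < ε := by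
  obtain ⟨δ, hδ, hδε⟩ := ENNReal.exists_pos_sum_of_countable' hε ι
  choose K hK hμK using fun i ↦ (hf i).exists_isCompact_graphOn_measure_compl_lt μ (hδ i).ne'
  have hclosed : IsClosed (⋂ i, K i) := isClosed_iInter fun i ↦ (hK i).of_graphOn.isClosed
  refine ⟨⋂ i, K i, fun i ↦ (hK i).graphOn_of_subset hclosed (iInter_subset K i), ?_⟩
  calc μ (⋂ i, K i)ᶜ = μ (⋃ i, (K i)ᶜ) := by rw [compl_iInter]
    _ ≤ ∑' i, μ (K i)ᶜ := measure_iUnion_le _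
    _ ≤ ∑' i, δ i := ENNReal.tsum_le_tsum fun i ↦ (hμK i).le
    _ < ε := hδε

theorem exists_seq_forall_isCompact_graphOn_measure_compl_iUnion_eq_zero {ι : Type*}
    [Countable ι] {f : ι → X → Y} (hf : ∀ i, Measurable (f i)) :
    ∃ K : ℕ → Set X, (∀ m i, IsCompact ((K m).graphOn (f i))) ∧ μ (⋃ m, K m)ᶜ = 0 := by
  choose K hK hμK using fun m : ℕ ↦
    exists_forall_isCompact_graphOn_measure_compl_lt μ hf (ε := (m : ℝ≥0∞)⁻¹) (by simp)
  refine ⟨K, hK, ?_⟩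
  by_contra hne
  obtain ⟨m, hm⟩ := ENNReal.exists_inv_nat_lt hne
  have : μ (⋃ m, K m)ᶜ ≤ μ (K m)ᶜ := measure_mono (compl_subset_compl.2 (subset_iUnion K m))
  exact (this.trans_lt (hμK m)).not_gt hm

end Measurable

theorem stmt11_general {Ω : Type*} [TopologicalSpace Ω] [CompactSpace Ω]
    [TopologicalSpace.MetrizableSpace Ω] [MeasurableSpace Ω] [BorelSpace Ω]
    (P : Measure Ω) [IsProbabilityMeasure P]
    (Y : ℕ → Ω → ℝ) (hYm : ∀ n, Measurable (Y n)) :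
    ∃ Ω1 : Set Ω, P Ω1 = 1 ∧
      ∃ K : ℕ → Set (Ω × ℝ), (∀ n, IsCompact (K n)) ∧
        {p : Ω × ℝ | p.1 ∈ Ω1 ∧ ∃ k, Y k p.1 = p.2} = ⋃ n, K n := by
  have : PolishSpace Ω := by
    let := TopologicalSpace.metrizableSpaceMetric Ω
    infer_instance
  obtain ⟨C, hC, hPC⟩ := exists_seq_forall_isCompact_graphOn_measure_compl_iUnion_eq_zero P hYm
  have hCm : MeasurableSet (⋃ m, C m) :=
    .iUnion fun m ↦ (hC m 0).of_graphOn.isClosed.measurableSet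
  refine ⟨⋃ m, C m, (prob_compl_eq_zero_iff hCm).1 hPC,
    fun n ↦ (C n.unpair.1).graphOn (Y n.unpair.2), fun n ↦ hC _ _, ?_⟩
  rw [iUnion_unpair fun m k ↦ (C m).graphOn (Y k)]
  ext p
  simp only [mem_ofPred_eq, mem_iUnion, mem_graphOn]
  exact ⟨fun ⟨⟨m, hm⟩, k, hk⟩ ↦ ⟨m, k, hm, hk⟩, fun ⟨m, k, hm, hk⟩ ↦ ⟨⟨m, hm⟩, k, hk⟩⟩

theorem stmt11 {Ω : Type*} [TopologicalSpace Ω] [CompactSpace Ω]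
    [TopologicalSpace.MetrizableSpace Ω] [MeasurableSpace Ω] [BorelSpace Ω]
    (P : Measure Ω) [IsProbabilityMeasure P]
    (Y : ℕ → Ω → ℝ) (hYm : ∀ n, Measurable (Y n))
    (hY1 : ∀ n ω, Y n ω ∈ Ioo (0:ℝ) 1) :
    ∃ Ω1 : Set Ω, P Ω1 = 1 ∧
      ∃ K : ℕ → Set (Ω × ℝ), (∀ n, IsCompact (K n)) ∧
        {p : Ω × ℝ | p.1 ∈ Ω1 ∧ ∃ k, Y k p.1 = p.2} = ⋃ n, K n :=
  stmt11_general P Y hYm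
end
end

section
/- Let A ⊆ (0,1) be a measurable set with Leb(A) > 0 and L ⊆ (0,1) a dense countable set. For s ∈ (0,1), let T_s : (0,1) → (0,1) be the cyclic shift T_s(t) = t + s mod 1. Then the set A ∩ T_s(L) is infinite for almost all s ∈ (0,1). -/
/-!
Call `s` bad for a countable set `D` dense in `(0,1)` if `T_s t ∉ A` for every `t ∈ D`. If the
bad set `N` had positive measure, Fubini would give a translate of `A` meeting `N` in positive
measure, and Steinhaus' theorem would make `A - N` a neighbourhood of a point of `[-1, 1]`. That
neighbourhood, or its translate by `1`, meets `D` in some `t = a - n` (resp. `t - 1 = a - n`) with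
`a ∈ A`, `n ∈ N`, and then `T_n t = a`, a contradiction. Applying this to `L` minus each of its
countably many finite subsets, for almost every `s` infinitely many `t ∈ L` satisfy `T_s t ∈ A`,
and `T_s` is injective on `(0,1)`.
-/

open MeasureTheory Set
open scoped ENNReal

noncomputable section

/-- The cyclic shift `T_s(t) = t + s mod 1` of the interval `(0,1)`. -/
def Tshift (s t : ℝ) : ℝ := if t + s < 1 then t + s else t + s - 1

open Filter Topology Measure
open scoped Pointwise

theorem subset_closure_sdiff_finite {X : Type*} [TopologicalSpace X] [T1Space X]
    [∀ x : X, NeBot (𝓝[≠] x)] {U s t : Set X} (hU : IsOpen U) (hs : U ⊆ closure s)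
    (ht : t.Finite) : U ⊆ closure (s \ t) := by
  have hdense : Dense (s ∪ Uᶜ) := by
    refine dense_iff_closure_eq.2 (eq_univ_of_univ_subset fun x _ => ?_)
    rw [closure_union]
    by_cases hx : x ∈ U
    · exact Or.inl (hs hx)
    · exact Or.inr (subset_closure hx)
  refine ((hdense.sdiff_finite ht).open_subset_closure_inter hU).trans (closure_mono ?_)
  rintro x ⟨hxU, (hxs | hxU'), hxt⟩
  exacts [⟨hxs, hxt⟩, absurd hxU hxU']

section Steinhaus

variable {G : Type*} [MeasurableSpace G] {μ : Measure G} {s t : Set G}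

theorem exists_measure_inter_preimage_add_ne_zero [AddGroup G] [MeasurableAdd₂ G] [SFinite μ]
    [μ.IsAddLeftInvariant] (hs : MeasurableSet s) (ht : MeasurableSet t) (hs0 : μ s ≠ 0)
    (ht0 : μ t ≠ 0) : ∃ v, μ (s ∩ (· + v) ⁻¹' t) ≠ 0 := by
  have hprod : (μ.prod μ) ((fun z : G × G => (z.1, z.1 + z.2)) ⁻¹' s ×ˢ t) ≠ 0 := by
    rw [(measurePreserving_prod_add μ μ).measure_preimage (hs.prod ht).nullMeasurableSet,
      prod_prod]
    exact mul_ne_zero hs0 ht0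
  rw [prod_apply_symm ((measurable_fst.prodMk measurable_add) (hs.prod ht))] at hprod
  by_contra! h
  exact hprod ((lintegral_congr fun y => h y).trans lintegral_zero)

theorem exists_sub_mem_nhds_of_addHaar_pos [AddCommGroup G] [TopologicalSpace G]
    [IsTopologicalAddGroup G] [LocallyCompactSpace G] [BorelSpace G] [MeasurableAdd₂ G]
    [μ.IsAddHaarMeasure] [μ.InnerRegular] [SFinite μ] (hs : MeasurableSet s)
    (ht : MeasurableSet t) (hs0 : μ s ≠ 0) (ht0 : μ t ≠ 0) : ∃ v, t - s ∈ 𝓝 v := by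
  obtain ⟨v, hv⟩ := exists_measure_inter_preimage_add_ne_zero hs ht hs0 ht0
  have hC : s ∩ (· + v) ⁻¹' t - s ∩ (· + v) ⁻¹' t ∈ 𝓝 0 :=
    sub_mem_nhds_zero_of_addHaar_pos μ _ (hs.inter (measurable_add_const v ht))
      (pos_iff_ne_zero.2 hv)
  refine ⟨v, mem_of_superset ((continuous_sub_right v).tendsto' v 0 (sub_self v) hC) ?_⟩
  rintro x ⟨c₁, ⟨-, hc₁⟩, c₂, ⟨hc₂, -⟩, hx⟩
  refine ⟨c₁ + v, hc₁, c₂, hc₂, ?_⟩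
  dsimp only at hx ⊢
  rw [← sub_add_cancel x v, ← hx]
  abel

end Steinhaus

theorem measurable_Tshift_left (t : ℝ) : Measurable fun s => Tshift s t :=
  Measurable.ite (measurableSet_lt (by fun_prop) measurable_const) (by fun_prop) (by fun_prop)

theorem Tshift_eq {s t a : ℝ} (ha : a ∈ Ico 0 1) (h : t + s = a ∨ t + s = a + 1) :
    Tshift s t = a := by
  obtain ⟨ha0, ha1⟩ := ha
  unfold Tshift
  rcases h with h | h <;> split_ifs <;> linarith

theorem Tshift_injOn (s : ℝ) : InjOn (Tshift s) (Ico 0 1) := by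
  rintro t₁ ⟨h₁0, h₁1⟩ t₂ ⟨h₂0, h₂1⟩ h
  unfold Tshift at h
  split_ifs at h <;> linarith

theorem ae_exists_Tshift_mem {A D : Set ℝ} (hAm : MeasurableSet A) (hA : A ⊆ Ico 0 1)
    (hA0 : volume A ≠ 0) (hDc : D.Countable) (hD : Ioo 0 1 ⊆ closure D) :
    ∀ᵐ s ∂volume.restrict (Ioo 0 1), ∃ t ∈ D, Tshift s t ∈ A := by
  set N := Ioo 0 1 ∩ ⋂ t ∈ D, (fun s => Tshift s t) ⁻¹' Aᶜ
  suffices hN0 : volume N = 0 by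
    rw [ae_restrict_iff' measurableSet_Ioo]
    filter_upwards [measure_eq_zero_iff_ae_notMem.1 hN0] with s hs hsI
    by_contra! h
    exact hs ⟨hsI, mem_iInter₂.2 h⟩
  have hNm : MeasurableSet N :=
    measurableSet_Ioo.inter (.biInter hDc fun t _ => measurable_Tshift_left t hAm.compl)
  by_contra hN0
  obtain ⟨v, hv⟩ := exists_sub_mem_nhds_of_addHaar_pos hNm hAm hN0 hA0
  obtain ⟨a, ha, n, hn, rfl⟩ := mem_of_mem_nhds hv
  have hD' : Icc 0 1 ⊆ closure D := by
    simpa only [closure_Ioo zero_ne_one, isClosed_closure.closure_eq] using closure_mono hD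
  -- `T_n t = a` means `t + n = a` or `t + n = a + 1`, so shift `a - n` into `[0, 1]`.
  obtain ⟨k, hk, hkD⟩ : ∃ k : ℝ, (k = 0 ∨ k = 1) ∧ a - n + k ∈ closure D := by
    obtain ⟨ha0, ha1⟩ := hA ha
    obtain ⟨hn0, hn1⟩ := hn.1
    rcases le_or_gt 0 (a - n) with h | h
    · exact ⟨0, Or.inl rfl, hD' ⟨by linarith, by linarith⟩⟩
    · exact ⟨1, Or.inr rfl, hD' ⟨by linarith, by linarith⟩⟩
  have hnhds : (· - k) ⁻¹' (A - N) ∈ 𝓝 (a - n + k) :=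
    (continuous_sub_right k).tendsto' _ _ (add_sub_cancel_right _ _) hv
  obtain ⟨t, ⟨a', ha', n', hn', ht⟩, htD⟩ := mem_closure_iff_nhds.1 hkD _ hnhds
  have hT : Tshift n' t = a' := by
    refine Tshift_eq (hA ha') ?_
    dsimp only at ht
    rcases hk with rfl | rfl
    exacts [Or.inl (by linarith), Or.inr (by linarith)]
  exact mem_iInter₂.1 hn'.2 t htD (show Tshift n' t ∈ A from hT ▸ ha')

theorem stmt14 (A : Set ℝ) (hAm : MeasurableSet A) (hAsub : A ⊆ Ioo (0:ℝ) 1)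
    (hApos : 0 < volume A)
    (L : Set ℝ) (hLsub : L ⊆ Ioo (0:ℝ) 1) (hLc : L.Countable)
    (hLd : Ioo (0:ℝ) 1 ⊆ closure L) :
    ∀ᵐ s ∂(volume.restrict (Ioo (0:ℝ) 1)),
      (A ∩ (Tshift s '' L)).Infinite := by
  have hAsub' : A ⊆ Ico 0 1 := hAsub.trans Ioo_subset_Ico_self
  have hcofinite : ∀ᵐ s ∂volume.restrict (Ioo 0 1),
      ∀ F ∈ {F | F.Finite ∧ F ⊆ L}, ∃ t ∈ L \ F, Tshift s t ∈ A :=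
    (ae_ball_iff (countable_ofPred_finite_subset hLc)).2 fun F hF =>
      ae_exists_Tshift_mem hAm hAsub' hApos.ne' (hLc.mono sdiff_subset)
        (subset_closure_sdiff_finite isOpen_Ioo hLd hF.1)
  filter_upwards [hcofinite] with s hs
  have hhits : {t ∈ L | Tshift s t ∈ A}.Infinite := fun hfin => by
    obtain ⟨t, ⟨htL, htH⟩, htA⟩ := hs _ ⟨hfin, sep_subset _ _⟩
    exact htH ⟨htL, htA⟩
  refine (hhits.image ((Tshift_injOn s).mono ?_)).mono ?_
  · exact fun t ht => Ioo_subset_Ico_self (hLsub ht.1)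
  · rintro _ ⟨t, ⟨htL, htA⟩, rfl⟩
    exact ⟨htA, mem_image_of_mem _ htL⟩
end
end

section
/- The set M_W = {m ∈ M : m((0,1)×(0,1) ∖ W) = 0} of measures in M concentrated on a Borel set W, partially ordered by m ≤ m' (meaning m(E) ≤ m'(E) for all Borel E), contains a maximal element, where M is the set of positive Borel measures on (0,1)×(0,1) with both marginals bounded by Lebesgue measure. -/
open MeasureTheory Set
open scoped ENNReal

noncomputable section

/-!
Every chain `c` in `M_W` has an upper bound in `M_W`, namely its pointwise supremum
`E ↦ ⨆ m ∈ c, m E`: a chain is directed, and over a directed family suprema commute with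
countable sums in `ℝ≥0∞`, so this set function is again countably additive. The marginal
bounds and the vanishing off `W` pass to the supremum termwise, and Zorn's lemma gives a
maximal element.
-/

theorem ENNReal.tsum_iSup_of_directed {ι α : Type*} {f : α → ι → ℝ≥0∞}
    (hf : ∀ i j, ∃ k, ∀ a, f a i ≤ f a k ∧ f a j ≤ f a k) :
    ∑' a, ⨆ i, f a i = ⨆ i, ∑' a, f a i :=
  calc ∑' a, ⨆ i, f a i = ⨆ s : Finset α, ∑ a ∈ s, ⨆ i, f a i := ENNReal.tsum_eq_iSup_sum
    _ = ⨆ s : Finset α, ⨆ i, ∑ a ∈ s, f a i :=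
        iSup_congr fun _ => ENNReal.finsetSum_iSup hf
    _ = ⨆ i, ⨆ s : Finset α, ∑ a ∈ s, f a i := iSup_comm
    _ = ⨆ i, ∑' a, f a i := iSup_congr fun _ => ENNReal.tsum_eq_iSup_sum.symm

namespace MeasureTheory.Measure

variable {ι α β : Type*} [MeasurableSpace α] {μ : ι → Measure α} (hμ : Directed (· ≤ ·) μ)

def directedSup : Measure α :=
  ofMeasurable (fun s _ => ⨆ i, μ i s) (by simp) fun g hg hd => by
    rw [ENNReal.tsum_iSup_of_directed fun i j =>
      (hμ i j).imp fun _ hk n => ⟨hk.1 (g n), hk.2 (g n)⟩]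
    exact iSup_congr fun i => measure_iUnion hd hg

variable {hμ}

theorem directedSup_apply {s : Set α} (hs : MeasurableSet s) :
    directedSup hμ s = ⨆ i, μ i s :=
  ofMeasurable_apply s hs

theorem le_directedSup (i : ι) : μ i ≤ directedSup hμ :=
  le_iff.2 fun _ hs => (directedSup_apply hs).symm ▸ le_iSup (fun i => μ i _) i

theorem map_directedSup_le [MeasurableSpace β] {f : α → β} (hf : Measurable f) {ν : Measure β}
    (h : ∀ i, (μ i).map f ≤ ν) : (directedSup hμ).map f ≤ ν :=
  le_iff.2 fun s hs => by
    rw [map_apply hf hs, directedSup_apply (hf hs)]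
    exact iSup_le fun i => map_apply hf hs ▸ h i s

theorem directedSup_apply_eq_zero {s : Set α} (hs : MeasurableSet s) (h : ∀ i, μ i s = 0) :
    directedSup hμ s = 0 := by
  simp [directedSup_apply hs, h]

end MeasureTheory.Measure

open Measure in
theorem directedSup_mem_Mset {ι : Type*} {μ : ι → Measure (ℝ × ℝ)} (hμ : Directed (· ≤ ·) μ)
    (h : ∀ i, μ i ∈ Mset) : directedSup hμ ∈ Mset :=
  ⟨map_directedSup_le measurable_fst fun i => (h i).1,
    map_directedSup_le measurable_snd fun i => (h i).2⟩

open Measure in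
theorem stmt18 (W : Set (ℝ × ℝ)) (hW : MeasurableSet W) :
    ∃ m : Measure (ℝ × ℝ),
      (m ∈ Mset ∧ m ((Ioo (0:ℝ) 1 ×ˢ Ioo (0:ℝ) 1) \ W) = 0) ∧
      ∀ m' : Measure (ℝ × ℝ),
        m' ∈ Mset → m' ((Ioo (0:ℝ) 1 ×ˢ Ioo (0:ℝ) 1) \ W) = 0 →
        m ≤ m' → m' = m := by
  set D := (Ioo (0:ℝ) 1 ×ˢ Ioo (0:ℝ) 1) \ W
  have hD : MeasurableSet D := (measurableSet_Ioo.prod measurableSet_Ioo).diff hW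
  obtain ⟨m, hm⟩ := zorn_le₀ {m | m ∈ Mset ∧ m D = 0} fun c hc hchain => by
    have hdir : Directed (· ≤ ·) (Subtype.val : c → Measure (ℝ × ℝ)) :=
      directedOn_iff_directed.1 hchain.directedOn
    exact ⟨directedSup hdir,
      ⟨directedSup_mem_Mset hdir fun m => (hc m.2).1,
        directedSup_apply_eq_zero hD fun m => (hc m.2).2⟩,
      fun m hm => le_directedSup (⟨m, hm⟩ : c)⟩
  exact ⟨m, hm.prop, fun m' hm' hm'D hle => le_antisymm (hm.2 ⟨hm', hm'D⟩ hle) hle⟩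
end
end
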